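/- arXiv:math/0411165 — 7 statements merged into one kernel-verified Lean document; each statement's English description precedes it below -/
import Mathlib

section
/- For all indices j₁, j₂, j₃, k₁ ∈ {0,1}, at every point of U one has the cross-differentiation identity: ∂_{y^{j₃}}( □^{k₁}_{y^{j₁}y^{j₂}} ) − ∂_{y^{j₂}}( □^{k₁}_{y^{j₁}y^{j₃}} ) = −Σ_{k₂=0}^{1} □^{k₂}_{y^{j₁}y^{j₂}} · □^{k₁}_{y^{j₃}y^{k₂}} + Σ_{k₂=0}^{1} □^{k₂}_{y^{j₁}y^{j₃}} · □^{k₁}_{y^{j₂}y^{k₂}}. -/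
/-!
The square functions are the coordinates of the second partials of `F = (X, Y)` in the frame
`(F_x, F_y)`: by Cramer's rule `F_{ab} = ∑ₖ □ᵏ_{ab} F_k`. Differentiating this in direction `c` and
substituting it once more for `F_{kc}` expresses `F_{abc}` in the same frame. Since `F_{abc} = F_{acb}`
and `F_x, F_y` are linearly independent (`Δ ≠ 0`), the two coordinate vectors agree, which is the
identity.
-/

/-- Directional partial derivative on `ℝ²`: index `0` is the `x`-direction
(`y⁰ ≡ x`), index `1` is the `y`-direction (`y¹ ≡ y`). -/
noncomputable def pder (i : Fin 2) (f : ℝ × ℝ → ℝ) : ℝ × ℝ → ℝ :=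
  fun p => fderiv ℝ f p (![((1 : ℝ), (0 : ℝ)), ((0 : ℝ), (1 : ℝ))] i)

/-- The Jacobian determinant `Δ(x|y) = X_x·Y_y − Y_x·X_y`. -/
noncomputable def jac2 (X Y : ℝ × ℝ → ℝ) : ℝ × ℝ → ℝ :=
  fun p => pder 0 X p * pder 1 Y p - pder 0 Y p * pder 1 X p

/-- The square functions `□^k_{y^{j₁}y^{j₂}}`:
`□⁰_{y^{j₁}y^{j₂}} = Δ(y^{j₁}y^{j₂}|y)/Δ(x|y)` and
`□¹_{y^{j₁}y^{j₂}} = Δ(x|y^{j₁}y^{j₂})/Δ(x|y)`. -/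
noncomputable def sqfn (X Y : ℝ × ℝ → ℝ) (k j₁ j₂ : Fin 2) : ℝ × ℝ → ℝ :=
  fun p =>
    (if k = 0 then
        pder j₂ (pder j₁ X) p * pder 1 Y p - pder j₂ (pder j₁ Y) p * pder 1 X p
      else
        pder 0 X p * pder j₂ (pder j₁ Y) p - pder 0 Y p * pder j₂ (pder j₁ X) p) /
      jac2 X Y p

open Filter Topology

section PartialDerivatives

variable {f g : ℝ × ℝ → ℝ} {p : ℝ × ℝ}

theorem ContDiffAt.pder {m n : WithTop ℕ∞} (hf : ContDiffAt ℝ n f p) (hmn : m + 1 ≤ n)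
    (i : Fin 2) : ContDiffAt ℝ m (pder i f) p :=
  (ContinuousLinearMap.apply ℝ ℝ (![((1 : ℝ), (0 : ℝ)), ((0 : ℝ), (1 : ℝ))] i)).contDiff
    |>.comp_contDiffAt p (hf.fderiv_right hmn)

theorem Filter.EventuallyEq.pder_eq (h : f =ᶠ[𝓝 p] g) (i : Fin 2) :
    pder i f p = pder i g p := by
  simp only [pder, h.fderiv_eq]

theorem pder_sum_mul {ι : Type*} (s : Finset ι) {u v : ι → ℝ × ℝ → ℝ}
    (hu : ∀ k ∈ s, DifferentiableAt ℝ (u k) p) (hv : ∀ k ∈ s, DifferentiableAt ℝ (v k) p)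
    (i : Fin 2) :
    pder i (fun q => ∑ k ∈ s, u k q * v k q) p =
      ∑ k ∈ s, (pder i (u k) p * v k p + u k p * pder i (v k) p) := by
  simp only [pder]
  rw [fderiv_fun_sum (A := fun k q => u k q * v k q) fun k hk => (hu k hk).mul (hv k hk)]
  simp only [FunLike.coe_sum, Finset.sum_apply]
  refine Finset.sum_congr rfl fun k hk => ?_
  rw [fderiv_fun_mul (hu k hk) (hv k hk)]
  simp only [add_apply, smul_apply, smul_eq_mul]
  ring

theorem pder_pder_comm (hf : ContDiffAt ℝ 2 f p) (i j : Fin 2) :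
    pder i (pder j f) p = pder j (pder i f) p := by
  have hd : DifferentiableAt ℝ (fderiv ℝ f) p :=
    (hf.fderiv_right (m := 1) (by norm_num)).differentiableAt (by norm_num)
  have hsecond : ∀ v w : ℝ × ℝ,
      fderiv ℝ (fun q => fderiv ℝ f q w) p v = fderiv ℝ (fderiv ℝ f) p v w := fun v w => by
    rw [fderiv_clm_apply hd (differentiableAt_const w)]
    simp
  show fderiv ℝ (fun q => fderiv ℝ f q _) p _ = fderiv ℝ (fun q => fderiv ℝ f q _) p _
  rw [hsecond, hsecond, (hf.isSymmSndFDerivAt (by simp)).eq]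

end PartialDerivatives

section StructureEquations

variable {X Y G : ℝ × ℝ → ℝ} {S : Fin 2 → Fin 2 → Fin 2 → ℝ × ℝ → ℝ} {p : ℝ × ℝ}

theorem eq_zero_of_sum_mul_pder_eq_zero (hJ : jac2 X Y p ≠ 0) {c : Fin 2 → ℝ}
    (hcX : ∑ m, c m * pder m X p = 0) (hcY : ∑ m, c m * pder m Y p = 0) : c = 0 := by
  simp only [Fin.sum_univ_two] at hcX hcY
  have h0 : c 0 * jac2 X Y p = 0 := by
    unfold jac2; linear_combination pder 1 Y p * hcX - pder 1 X p * hcY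
  have h1 : c 1 * jac2 X Y p = 0 := by
    unfold jac2; linear_combination pder 0 X p * hcY - pder 0 Y p * hcX
  ext m
  fin_cases m
  · exact (mul_eq_zero.1 h0).resolve_right hJ
  · exact (mul_eq_zero.1 h1).resolve_right hJ

theorem pder_pder_pder_eq_sum (hG : ContDiffAt ℝ 2 G p)
    (hS : ∀ m a b, DifferentiableAt ℝ (S m a b) p)
    (hGS : ∀ a b, pder b (pder a G) =ᶠ[𝓝 p] fun q => ∑ k, S k a b q * pder k G q)
    (a b c : Fin 2) :
    pder c (pder b (pder a G)) p =
      ∑ m, (pder c (S m a b) p + ∑ k, S k a b p * S m c k p) * pder m G p := by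
  have hdG : ∀ k, DifferentiableAt ℝ (pder k G) p := fun k =>
    (hG.pder (m := 1) (by norm_num) k).differentiableAt (by norm_num)
  calc pder c (pder b (pder a G)) p
      = pder c (fun q => ∑ k, S k a b q * pder k G q) p := (hGS a b).pder_eq c
    _ = ∑ k, (pder c (S k a b) p * pder k G p + S k a b p * pder c (pder k G) p) :=
        pder_sum_mul _ (fun k _ => hS k a b) (fun k _ => hdG k) c
    _ = ∑ k, (pder c (S k a b) p * pder k G p + S k a b p * ∑ m, S m c k p * pder m G p) := by
        refine Finset.sum_congr rfl fun k _ => ?_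
        rw [pder_pder_comm hG, (hGS c k).eq_of_nhds]
    _ = ∑ m, (pder c (S m a b) p + ∑ k, S k a b p * S m c k p) * pder m G p := by
        simp only [Fin.sum_univ_two]
        ring

theorem cross_differentiation_of_structure_eq (hX : ContDiffAt ℝ 3 X p) (hY : ContDiffAt ℝ 3 Y p)
    (hJ : jac2 X Y p ≠ 0) (hS : ∀ m a b, DifferentiableAt ℝ (S m a b) p)
    (hXS : ∀ a b, pder b (pder a X) =ᶠ[𝓝 p] fun q => ∑ k, S k a b q * pder k X q)
    (hYS : ∀ a b, pder b (pder a Y) =ᶠ[𝓝 p] fun q => ∑ k, S k a b q * pder k Y q)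
    (a b c m : Fin 2) :
    pder c (S m a b) p - pder b (S m a c) p =
      -(∑ k, S k a b p * S m c k p) + ∑ k, S k a c p * S m b k p := by
  -- `T b c` holds the coordinates of `∂_c ∂_b ∂_a (X, Y)` in the frame `(∂_0 (X, Y), ∂_1 (X, Y))`.
  set T : Fin 2 → Fin 2 → Fin 2 → ℝ := fun b c m =>
    pder c (S m a b) p + ∑ k, S k a b p * S m c k p with hT
  have hsymm : ∀ {G}, ContDiffAt ℝ 3 G p →
      (∀ a b, pder b (pder a G) =ᶠ[𝓝 p] fun q => ∑ k, S k a b q * pder k G q) →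
      ∑ m, (T b c m - T c b m) * pder m G p = 0 := fun hG hGS => by
    simp only [sub_mul, Finset.sum_sub_distrib, hT]
    rw [← pder_pder_pder_eq_sum (hG.of_le (by norm_num)) hS hGS,
      ← pder_pder_pder_eq_sum (hG.of_le (by norm_num)) hS hGS,
      pder_pder_comm (hG.pder (m := 2) (by norm_num) a), sub_self]
  have hT_eq := congrFun (eq_zero_of_sum_mul_pder_eq_zero hJ (hsymm hX hXS) (hsymm hY hYS)) m
  simp only [hT, Pi.zero_apply] at hT_eq
  linarith

end StructureEquations

section SquareFunctions

variable {X Y : ℝ × ℝ → ℝ} {p : ℝ × ℝ}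

theorem pder_pder_left_eq_sum_sqfn_mul (hJ : jac2 X Y p ≠ 0) (a b : Fin 2) :
    pder b (pder a X) p = ∑ k, sqfn X Y k a b p * pder k X p := by
  simp only [sqfn, Fin.sum_univ_two, Fin.isValue, ↓reduceIte, one_ne_zero]
  field_simp
  unfold jac2
  ring

theorem pder_pder_right_eq_sum_sqfn_mul (hJ : jac2 X Y p ≠ 0) (a b : Fin 2) :
    pder b (pder a Y) p = ∑ k, sqfn X Y k a b p * pder k Y p := by
  simp only [sqfn, Fin.sum_univ_two, Fin.isValue, ↓reduceIte, one_ne_zero]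
  field_simp
  unfold jac2
  ring

theorem differentiableAt_sqfn (hX : ContDiffAt ℝ 3 X p) (hY : ContDiffAt ℝ 3 Y p)
    (hJ : jac2 X Y p ≠ 0) (k a b : Fin 2) : DifferentiableAt ℝ (sqfn X Y k a b) p := by
  have h1 : ∀ {G}, ContDiffAt ℝ 3 G p → ∀ i, DifferentiableAt ℝ (pder i G) p := fun hG i =>
    (hG.pder (m := 1) (by norm_num) i).differentiableAt (by norm_num)
  have h2 : ∀ {G}, ContDiffAt ℝ 3 G p → DifferentiableAt ℝ (pder b (pder a G)) p := fun hG =>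
    ((hG.pder (m := 2) (by norm_num) a).pder (m := 1) (by norm_num) b).differentiableAt
      (by norm_num)
  have hdJ : DifferentiableAt ℝ (jac2 X Y) p :=
    ((h1 hX 0).mul (h1 hY 1)).sub ((h1 hY 0).mul (h1 hX 1))
  unfold sqfn
  simp only [div_eq_mul_inv]
  split_ifs
  · exact (((h2 hX).mul (h1 hY 1)).sub ((h2 hY).mul (h1 hX 1))).mul (hdJ.inv hJ)
  · exact (((h1 hX 0).mul (h2 hY)).sub ((h1 hY 0).mul (h2 hX))).mul (hdJ.inv hJ)

end SquareFunctions

/-- Cross-differentiation identities for the square functions of a pair of C³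
functions on an open set of ℝ² with nonvanishing Jacobian. -/
theorem square_fn_cross_differentiation (U : Set (ℝ × ℝ)) (hU : IsOpen U)
    (X Y : ℝ × ℝ → ℝ) (hX : ContDiffOn ℝ 3 X U) (hY : ContDiffOn ℝ 3 Y U)
    (hJ : ∀ p ∈ U, jac2 X Y p ≠ 0) :
    ∀ (j₁ j₂ j₃ k₁ : Fin 2), ∀ p ∈ U,
      pder j₃ (sqfn X Y k₁ j₁ j₂) p - pder j₂ (sqfn X Y k₁ j₁ j₃) p =
        -(∑ k₂ : Fin 2, sqfn X Y k₂ j₁ j₂ p * sqfn X Y k₁ j₃ k₂ p) +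
          ∑ k₂ : Fin 2, sqfn X Y k₂ j₁ j₃ p * sqfn X Y k₁ j₂ k₂ p := by
  intro j₁ j₂ j₃ k₁ p hp
  have hUp : U ∈ 𝓝 p := hU.mem_nhds hp
  have hXp := hX.contDiffAt hUp
  have hYp := hY.contDiffAt hUp
  exact cross_differentiation_of_structure_eq hXp hYp (hJ p hp)
    (differentiableAt_sqfn hXp hYp (hJ p hp))
    (fun a b => eventually_of_mem hUp fun q hq => pder_pder_left_eq_sum_sqfn_mul (hJ q hq) a b)
    (fun a b => eventually_of_mem hUp fun q hq => pder_pder_right_eq_sum_sqfn_mul (hJ q hq) a b)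
    j₁ j₂ j₃ k₁
end

section
/- Suppose that on U the following four first-order equations hold: Θ¹_y = −L_y + 2M_x + H·M − (1/2)L² + M·Θ⁰ + (1/2)(Θ¹)²; Θ⁰_x = −2G_y + H_x + G·L − (1/2)H² − G·Θ¹ + (1/2)(Θ⁰)²; Θ¹_x = −(2/3)H_y + (1/3)L_x + 2G·M − (1/2)H·L − (1/2)H·Θ¹ + (1/2)L·Θ⁰ + (1/2)Θ⁰·Θ¹; Θ⁰_y = −(1/3)H_y + (2/3)L_x + 2G·M − (1/2)H·L − (1/2)H·Θ¹ + (1/2)L·Θ⁰ + (1/2)Θ⁰·Θ¹. Then at every point of U the functions G, H, L, M satisfy the second-order partial differential equation 0 = −2G_yy + (4/3)H_xy − (2/3)L_xx + 2(G·L)_y − 2G_x·M − 4G·M_x + (2/3)H·L_x − (4/3)H·H_y. -/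
/-!
The equation is the integrability condition `(Θ⁰_x)_y = (Θ⁰_y)_x` of the system. Differentiate
the equation for `Θ⁰_x` in `y` and the one for `Θ⁰_y` in `x`, replace every first derivative of
`Θ⁰` and `Θ¹` by its right-hand side, and use `H_xy = H_yx`: all terms containing `Θ⁰`, `Θ¹`
cancel, and what remains is the stated second-order equation.
-/

/-- Partial derivative in the `x`-direction of a function on `ℝ²`. -/
noncomputable def pdx (f : ℝ × ℝ → ℝ) : ℝ × ℝ → ℝ := fun p => fderiv ℝ f p (1, 0)

/-- Partial derivative in the `y`-direction of a function on `ℝ²`. -/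
noncomputable def pdy (f : ℝ × ℝ → ℝ) : ℝ × ℝ → ℝ := fun p => fderiv ℝ f p (0, 1)

theorem fderiv_fderiv_apply_const {𝕜 E F : Type*} [NontriviallyNormedField 𝕜]
    [NormedAddCommGroup E] [NormedSpace 𝕜 E] [NormedAddCommGroup F] [NormedSpace 𝕜 F]
    {f : E → F} {p : E} (hd : DifferentiableAt 𝕜 (fderiv 𝕜 f) p) (v w : E) :
    fderiv 𝕜 (fun q => fderiv 𝕜 f q v) p w = fderiv 𝕜 (fderiv 𝕜 f) p w v := by
  simp [fderiv_clm_apply hd (differentiableAt_const v)]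

section PartialDerivatives

variable {U : Set (ℝ × ℝ)} {f g : ℝ × ℝ → ℝ} {p : ℝ × ℝ}

theorem ContDiffOn.differentiableAt_of_isOpen {n : WithTop ℕ∞} (hU : IsOpen U)
    (hf : ContDiffOn ℝ n f U) (hn : n ≠ 0) (hp : p ∈ U) : DifferentiableAt ℝ f p :=
  (hf.differentiableOn hn).differentiableAt (hU.mem_nhds hp)

theorem ContDiffOn.differentiableAt_fderiv_apply (hU : IsOpen U) (hf : ContDiffOn ℝ 2 f U)
    (hp : p ∈ U) (v : ℝ × ℝ) : DifferentiableAt ℝ (fun q => fderiv ℝ f q v) p :=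
  (((hf.fderiv_of_isOpen hU one_add_one_eq_two.le).differentiableOn one_ne_zero).differentiableAt
    (hU.mem_nhds hp)).clm_apply (differentiableAt_const v)

theorem ContDiffOn.differentiableAt_pdx (hU : IsOpen U) (hf : ContDiffOn ℝ 2 f U) (hp : p ∈ U) :
    DifferentiableAt ℝ (pdx f) p :=
  hf.differentiableAt_fderiv_apply hU hp (1, 0)

theorem ContDiffOn.differentiableAt_pdy (hU : IsOpen U) (hf : ContDiffOn ℝ 2 f U) (hp : p ∈ U) :
    DifferentiableAt ℝ (pdy f) p :=
  hf.differentiableAt_fderiv_apply hU hp (0, 1)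

theorem ContDiffOn.pdy_pdx_eq_pdx_pdy (hU : IsOpen U) (hf : ContDiffOn ℝ 2 f U) (hp : p ∈ U) :
    pdy (pdx f) p = pdx (pdy f) p := by
  have hf' := hf.contDiffAt (hU.mem_nhds hp)
  have hd := (hf'.fderiv_right one_add_one_eq_two.le).differentiableAt one_ne_zero
  unfold pdx pdy
  rw [fderiv_fderiv_apply_const hd, fderiv_fderiv_apply_const hd]
  exact hf'.isSymmSndFDerivAt (by simp [minSmoothness_of_isRCLikeNormedField]) _ _

theorem pdx_congr_of_eqOn (hU : IsOpen U) (hp : p ∈ U) (h : Set.EqOn f g U) :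
    pdx f p = pdx g p := by
  rw [pdx, pdx, (Filter.eventuallyEq_of_mem (hU.mem_nhds hp) h).fderiv_eq]

theorem pdy_congr_of_eqOn (hU : IsOpen U) (hp : p ∈ U) (h : Set.EqOn f g U) :
    pdy f p = pdy g p := by
  rw [pdy, pdy, (Filter.eventuallyEq_of_mem (hU.mem_nhds hp) h).fderiv_eq]

theorem pdx_add (hf : DifferentiableAt ℝ f p) (hg : DifferentiableAt ℝ g p) :
    pdx (fun z => f z + g z) p = pdx f p + pdx g p := by
  simp [pdx, fderiv_fun_add hf hg]

theorem pdy_add (hf : DifferentiableAt ℝ f p) (hg : DifferentiableAt ℝ g p) :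
    pdy (fun z => f z + g z) p = pdy f p + pdy g p := by
  simp [pdy, fderiv_fun_add hf hg]

theorem pdx_sub (hf : DifferentiableAt ℝ f p) (hg : DifferentiableAt ℝ g p) :
    pdx (fun z => f z - g z) p = pdx f p - pdx g p := by
  simp [pdx, fderiv_fun_sub hf hg]

theorem pdy_sub (hf : DifferentiableAt ℝ f p) (hg : DifferentiableAt ℝ g p) :
    pdy (fun z => f z - g z) p = pdy f p - pdy g p := by
  simp [pdy, fderiv_fun_sub hf hg]

theorem pdx_mul (hf : DifferentiableAt ℝ f p) (hg : DifferentiableAt ℝ g p) :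
    pdx (fun z => f z * g z) p = f p * pdx g p + g p * pdx f p := by
  simp [pdx, fderiv_fun_mul hf hg]

theorem pdy_mul (hf : DifferentiableAt ℝ f p) (hg : DifferentiableAt ℝ g p) :
    pdy (fun z => f z * g z) p = f p * pdy g p + g p * pdy f p := by
  simp [pdy, fderiv_fun_mul hf hg]

@[simp]
theorem pdx_const (c : ℝ) : pdx (fun _ => c) p = 0 := by
  simp [pdx]

@[simp]
theorem pdy_const (c : ℝ) : pdy (fun _ => c) p = 0 := by
  simp [pdy]

end PartialDerivatives

/-- If `G, H, L, M, Θ⁰, Θ¹` are C² functions on an open set `U ⊆ ℝ²` satisfying the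
(complete) second auxiliary system of first-order equations, then `G, H, L, M`
satisfy the first of Lie's two second-order partial differential equations. -/
theorem second_auxiliary_compatibility (U : Set (ℝ × ℝ)) (hU : IsOpen U)
    (G H L M Θ0 Θ1 : ℝ × ℝ → ℝ)
    (hG : ContDiffOn ℝ 2 G U) (hH : ContDiffOn ℝ 2 H U)
    (hL : ContDiffOn ℝ 2 L U) (hM : ContDiffOn ℝ 2 M U)
    (hΘ0 : ContDiffOn ℝ 2 Θ0 U) (hΘ1 : ContDiffOn ℝ 2 Θ1 U)
    (h1 : ∀ p ∈ U, pdy Θ1 p =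
      -pdy L p + 2 * pdx M p + H p * M p - (1/2) * (L p)^2 + M p * Θ0 p
        + (1/2) * (Θ1 p)^2)
    (h2 : ∀ p ∈ U, pdx Θ0 p =
      -2 * pdy G p + pdx H p + G p * L p - (1/2) * (H p)^2 - G p * Θ1 p
        + (1/2) * (Θ0 p)^2)
    (h3 : ∀ p ∈ U, pdx Θ1 p =
      -(2/3) * pdy H p + (1/3) * pdx L p + 2 * G p * M p - (1/2) * H p * L p
        - (1/2) * H p * Θ1 p + (1/2) * L p * Θ0 p + (1/2) * Θ0 p * Θ1 p)
    (h4 : ∀ p ∈ U, pdy Θ0 p =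
      -(1/3) * pdy H p + (2/3) * pdx L p + 2 * G p * M p - (1/2) * H p * L p
        - (1/2) * H p * Θ1 p + (1/2) * L p * Θ0 p + (1/2) * Θ0 p * Θ1 p) :
    ∀ p ∈ U, 0 =
      -2 * pdy (pdy G) p + (4/3) * pdy (pdx H) p - (2/3) * pdx (pdx L) p
        + 2 * pdy (fun z => G z * L z) p - 2 * pdx G p * M p - 4 * G p * pdx M p
        + (2/3) * H p * pdx L p - (4/3) * H p * pdy H p := by
  intro p hp
  have dG := hG.differentiableAt_of_isOpen hU two_ne_zero hp
  have dH := hH.differentiableAt_of_isOpen hU two_ne_zero hp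
  have dL := hL.differentiableAt_of_isOpen hU two_ne_zero hp
  have dM := hM.differentiableAt_of_isOpen hU two_ne_zero hp
  have dΘ0 := hΘ0.differentiableAt_of_isOpen hU two_ne_zero hp
  have dΘ1 := hΘ1.differentiableAt_of_isOpen hU two_ne_zero hp
  have dGy := hG.differentiableAt_pdy hU hp
  have dHx := hH.differentiableAt_pdx hU hp
  have dHy := hH.differentiableAt_pdy hU hp
  have dLx := hL.differentiableAt_pdx hU hp
  have hΘ0_xy := hΘ0.pdy_pdx_eq_pdx_pdy hU hp
  rw [pdy_congr_of_eqOn hU hp h2, pdx_congr_of_eqOn hU hp h4] at hΘ0_xy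
  simp (disch := fun_prop) only [sq, pdx_add, pdx_sub, pdx_mul, pdx_const,
    pdy_add, pdy_sub, pdy_mul, pdy_const] at hΘ0_xy ⊢
  rw [h1 p hp, h2 p hp, h3 p hp, h4 p hp] at hΘ0_xy
  rw [hH.pdy_pdx_eq_pdx_pdy hU hp] at hΘ0_xy ⊢
  linear_combination -hΘ0_xy
end

section
/- For all indices j, l₁, l₂, l₃ ∈ {0, 1, …, m}, at every point of U one has the cross-differentiation identity: ∂_{y^{l₃}}( □^j_{y^{l₁}y^{l₂}} ) − ∂_{y^{l₂}}( □^j_{y^{l₁}y^{l₃}} ) = −Σ_{k=0}^m □^k_{y^{l₁}y^{l₂}} · □^j_{y^{l₃}y^{k}} + Σ_{k=0}^m □^k_{y^{l₁}y^{l₃}} · □^j_{y^{l₂}y^{k}}. -/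
/-! By Cramer's rule the square functions solve the linear system
`∑ₖ Zⁱ_{y^k} □^k_{y^a y^b} = Zⁱ_{y^a y^b}`, whose matrix is the Jacobian matrix.
Differentiating this system in `y^c` and expanding the second derivatives `Zⁱ_{y^k y^c}`
it produces by the same system shows that the Jacobian matrix maps the vector
`∂_{y^c} □^•_{y^a y^b} + ∑ₖ □^k_{y^a y^b} □^•_{y^k y^c}` to the third derivatives
`Zⁱ_{y^a y^b y^c}`, which are symmetric in `b, c`. As the Jacobian matrix is invertible,
that vector is symmetric in `b, c` as well; with the symmetry of `□` in its lower indices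
this is the identity. -/

/-- Partial derivative in the direction of the `i`-th coordinate `y^i`
(with the convention `y⁰ ≡ x`) of a function on `ℝ^{1+m}`. -/
noncomputable def pd (m : ℕ) (i : Fin (m + 1)) (f : (Fin (m + 1) → ℝ) → ℝ) :
    (Fin (m + 1) → ℝ) → ℝ :=
  fun z => fderiv ℝ f z (Pi.single i 1)

/-- The Jacobian determinant `Δ(x|y¹|⋯|y^m)` of the family `Z = (X, Y¹, …, Y^m)`. -/
noncomputable def jacDet (m : ℕ) (Z : Fin (m + 1) → (Fin (m + 1) → ℝ) → ℝ)
    (z : Fin (m + 1) → ℝ) : ℝ :=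
  (Matrix.of fun i j => pd m j (Z i) z).det

/-- The modified determinant `Δ(x|⋯|^k y^{l₁}y^{l₂}|⋯|y^m)`, obtained from the
Jacobian determinant by replacing its `k`-th column by the column of second-order
derivatives `∂_{y^{l₁}}∂_{y^{l₂}}`. -/
noncomputable def jacDetRep (m : ℕ) (Z : Fin (m + 1) → (Fin (m + 1) → ℝ) → ℝ)
    (k l₁ l₂ : Fin (m + 1)) (z : Fin (m + 1) → ℝ) : ℝ :=
  (Matrix.of fun i j =>
    if j = k then pd m l₂ (pd m l₁ (Z i)) z else pd m j (Z i) z).det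

/-- The square functions `□^k_{y^{l₁}y^{l₂}} = Δ(x|⋯|^k y^{l₁}y^{l₂}|⋯|y^m) / Δ(x|y¹|⋯|y^m)`. -/
noncomputable def sqFn (m : ℕ) (Z : Fin (m + 1) → (Fin (m + 1) → ℝ) → ℝ)
    (k l₁ l₂ : Fin (m + 1)) (z : Fin (m + 1) → ℝ) : ℝ :=
  jacDetRep m Z k l₁ l₂ z / jacDet m Z z

open Filter Topology Matrix

theorem DifferentiableAt.matrix_det {𝕜 E n : Type*} [NontriviallyNormedField 𝕜]
    [NormedAddCommGroup E] [NormedSpace 𝕜 E] [Fintype n] [DecidableEq n]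
    {M : E → Matrix n n 𝕜} {x : E} (hM : ∀ i j, DifferentiableAt 𝕜 (fun y => M y i j) x) :
    DifferentiableAt 𝕜 (fun y => (M y).det) x := by
  simp only [Matrix.det_apply, Units.smul_def, zsmul_eq_mul]
  fun_prop

section PartialDerivatives

variable {m : ℕ} {f g : (Fin (m + 1) → ℝ) → ℝ} {z : Fin (m + 1) → ℝ}

theorem contDiffAt_pd {n k : WithTop ℕ∞} (hf : ContDiffAt ℝ n f z) (hkn : k + 1 ≤ n)
    (i : Fin (m + 1)) : ContDiffAt ℝ k (pd m i f) z :=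
  (hf.fderiv_right hkn).clm_apply contDiffAt_const

theorem differentiableAt_pd (hf : ContDiffAt ℝ 2 f z) (i : Fin (m + 1)) :
    DifferentiableAt ℝ (pd m i f) z :=
  (contDiffAt_pd (k := 1) hf (by norm_num) i).differentiableAt one_ne_zero

theorem pd_pd_eq_fderiv_fderiv (hf : DifferentiableAt ℝ (fderiv ℝ f) z) (a b : Fin (m + 1)) :
    pd m b (pd m a f) z = fderiv ℝ (fderiv ℝ f) z (Pi.single b 1) (Pi.single a 1) := by
  change fderiv ℝ (ContinuousLinearMap.apply ℝ ℝ (Pi.single a (1 : ℝ)) ∘ fderiv ℝ f) z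
    (Pi.single b 1) = _
  rw [fderiv_comp z (ContinuousLinearMap.differentiableAt _) hf]
  simp

theorem pd_pd_comm (hf : ContDiffAt ℝ 2 f z) (a b : Fin (m + 1)) :
    pd m b (pd m a f) z = pd m a (pd m b f) z := by
  have hf' : DifferentiableAt ℝ (fderiv ℝ f) z :=
    (hf.fderiv_right (m := 1) (by norm_num)).differentiableAt one_ne_zero
  rw [pd_pd_eq_fderiv_fderiv hf', pd_pd_eq_fderiv_fderiv hf']
  exact hf.isSymmSndFDerivAt (by simp [minSmoothness_of_isRCLikeNormedField]) _ _

theorem pd_mul (hf : DifferentiableAt ℝ f z) (hg : DifferentiableAt ℝ g z) (c : Fin (m + 1)) :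
    pd m c (fun w => f w * g w) z = pd m c f z * g z + f z * pd m c g z := by
  simp only [pd, fderiv_fun_mul hf hg, _root_.add_apply, _root_.smul_apply, smul_eq_mul]
  ring

theorem pd_sum {ι : Type*} {s : Finset ι} {F : ι → (Fin (m + 1) → ℝ) → ℝ}
    (hF : ∀ k ∈ s, DifferentiableAt ℝ (F k) z) (c : Fin (m + 1)) :
    pd m c (fun w => ∑ k ∈ s, F k w) z = ∑ k ∈ s, pd m c (F k) z := by
  simp only [pd, fderiv_fun_sum hF, _root_.sum_apply]

theorem pd_congr_of_eventuallyEq (h : f =ᶠ[𝓝 z] g) (c : Fin (m + 1)) :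
    pd m c f z = pd m c g z := by
  simp only [pd, h.fderiv_eq]

end PartialDerivatives

section SquareFunctions

variable {m : ℕ} {Z : Fin (m + 1) → (Fin (m + 1) → ℝ) → ℝ} {z : Fin (m + 1) → ℝ}

noncomputable def jacMat (m : ℕ) (Z : Fin (m + 1) → (Fin (m + 1) → ℝ) → ℝ)
    (z : Fin (m + 1) → ℝ) : Matrix (Fin (m + 1)) (Fin (m + 1)) ℝ :=
  Matrix.of fun i j => pd m j (Z i) z

theorem jacDet_eq_det_jacMat : jacDet m Z z = (jacMat m Z z).det := rfl

theorem jacDetRep_eq_cramer (k l₁ l₂ : Fin (m + 1)) :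
    jacDetRep m Z k l₁ l₂ z =
      cramer (jacMat m Z z) (fun i => pd m l₂ (pd m l₁ (Z i)) z) k := by
  rw [cramer_apply, jacDetRep]
  congr 1
  ext i j
  by_cases h : j = k <;> simp [h, jacMat]

theorem sum_pd_mul_sqFn (hJ : jacDet m Z z ≠ 0) (l₁ l₂ i : Fin (m + 1)) :
    ∑ k, pd m k (Z i) z * sqFn m Z k l₁ l₂ z = pd m l₂ (pd m l₁ (Z i)) z := by
  have h := congrFun (mulVec_cramer (jacMat m Z z) fun i => pd m l₂ (pd m l₁ (Z i)) z) i
  simp only [mulVec, dotProduct, Pi.smul_apply, smul_eq_mul] at h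
  rw [jacDet_eq_det_jacMat] at hJ
  simp only [sqFn, jacDetRep_eq_cramer, jacDet_eq_det_jacMat, mul_div_assoc', ← Finset.sum_div]
  rw [div_eq_iff hJ, mul_comm]
  exact h

theorem sqFn_comm (hZ : ∀ i, ContDiffAt ℝ 2 (Z i) z) (k l₁ l₂ : Fin (m + 1)) :
    sqFn m Z k l₁ l₂ z = sqFn m Z k l₂ l₁ z := by
  simp only [sqFn, jacDetRep, pd_pd_comm (hZ _) l₁ l₂]

theorem differentiableAt_sqFn (hZ : ∀ i, ContDiffAt ℝ 3 (Z i) z) (hJ : jacDet m Z z ≠ 0)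
    (k l₁ l₂ : Fin (m + 1)) : DifferentiableAt ℝ (sqFn m Z k l₁ l₂) z := by
  have hpd : ∀ i j, DifferentiableAt ℝ (pd m j (Z i)) z :=
    fun i j => differentiableAt_pd ((hZ i).of_le (by norm_num)) j
  have hpd2 : ∀ i, DifferentiableAt ℝ (pd m l₂ (pd m l₁ (Z i))) z :=
    fun i => differentiableAt_pd (contDiffAt_pd (hZ i) (by norm_num) l₁) l₂
  have hDet : DifferentiableAt ℝ (jacDet m Z) z := .matrix_det fun i j => hpd i j
  have hRep : DifferentiableAt ℝ (jacDetRep m Z k l₁ l₂) z := .matrix_det fun i j => by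
    by_cases h : j = k <;> simp only [Matrix.of_apply, h, if_true, if_false]
    exacts [hpd2 i, hpd i j]
  unfold sqFn
  fun_prop (disch := exact hJ)

end SquareFunctions

section CrossDifferentiation

variable {m : ℕ} {Z : Fin (m + 1) → (Fin (m + 1) → ℝ) → ℝ} {z : Fin (m + 1) → ℝ}

theorem jacMat_mulVec_pd_sqFn_add_sum (hZ : ∀ i, ContDiffAt ℝ 3 (Z i) z)
    (hJ : ∀ᶠ w in 𝓝 z, jacDet m Z w ≠ 0) (a b c : Fin (m + 1)) :
    jacMat m Z z *ᵥ
        (fun p => pd m c (sqFn m Z p a b) z + ∑ k, sqFn m Z k a b z * sqFn m Z p k c z)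
      = fun i => pd m c (pd m b (pd m a (Z i))) z := by
  have hJz : jacDet m Z z ≠ 0 := hJ.self_of_nhds
  funext i
  have hsystem : (fun w => ∑ k, pd m k (Z i) w * sqFn m Z k a b w) =ᶠ[𝓝 z]
      pd m b (pd m a (Z i)) :=
    hJ.mono fun w hw => sum_pd_mul_sqFn hw a b i
  have hpd : ∀ k, DifferentiableAt ℝ (pd m k (Z i)) z :=
    fun k => differentiableAt_pd ((hZ i).of_le (by norm_num)) k
  have hsq : ∀ k, DifferentiableAt ℝ (sqFn m Z k a b) z :=
    fun k => differentiableAt_sqFn hZ hJz k a b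
  calc (jacMat m Z z *ᵥ fun p => pd m c (sqFn m Z p a b) z +
          ∑ k, sqFn m Z k a b z * sqFn m Z p k c z) i
      = ∑ k, (pd m c (pd m k (Z i)) z * sqFn m Z k a b z +
          pd m k (Z i) z * pd m c (sqFn m Z k a b) z) := by
        simp only [← sum_pd_mul_sqFn hJz _ c i, mulVec, dotProduct, jacMat, Matrix.of_apply,
          mul_add, Finset.sum_add_distrib, Finset.mul_sum, Finset.sum_mul]
        rw [add_comm]
        congr 1
        rw [Finset.sum_comm]
        exact Finset.sum_congr rfl fun k _ => Finset.sum_congr rfl fun p _ => by ring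
    _ = pd m c (fun w => ∑ k, pd m k (Z i) w * sqFn m Z k a b w) z := by
        rw [pd_sum fun k _ => (hpd k).fun_mul (hsq k)]
        simp only [pd_mul (hpd _) (hsq _)]
    _ = pd m c (pd m b (pd m a (Z i))) z := pd_congr_of_eventuallyEq hsystem c

theorem pd_sqFn_add_sum_comm (hZ : ∀ i, ContDiffAt ℝ 3 (Z i) z)
    (hJ : ∀ᶠ w in 𝓝 z, jacDet m Z w ≠ 0) (a b c : Fin (m + 1)) :
    (fun p => pd m c (sqFn m Z p a b) z + ∑ k, sqFn m Z k a b z * sqFn m Z p k c z) =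
      fun p => pd m b (sqFn m Z p a c) z + ∑ k, sqFn m Z k a c z * sqFn m Z p k b z := by
  refine mulVec_injective_of_det_ne_zero (M := jacMat m Z z) hJ.self_of_nhds ?_
  simp only [jacMat_mulVec_pd_sqFn_add_sum hZ hJ]
  funext i
  exact pd_pd_comm (contDiffAt_pd (hZ i) (by norm_num) a) b c

theorem pd_sqFn_sub_pd_sqFn (hZ : ∀ i, ContDiffAt ℝ 3 (Z i) z)
    (hJ : ∀ᶠ w in 𝓝 z, jacDet m Z w ≠ 0) (j l₁ l₂ l₃ : Fin (m + 1)) :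
    pd m l₃ (sqFn m Z j l₁ l₂) z - pd m l₂ (sqFn m Z j l₁ l₃) z =
      -(∑ k, sqFn m Z k l₁ l₂ z * sqFn m Z j l₃ k z) +
        ∑ k, sqFn m Z k l₁ l₃ z * sqFn m Z j l₂ k z := by
  have h := congrFun (pd_sqFn_add_sum_comm hZ hJ l₁ l₂ l₃) j
  simp only [sqFn_comm (fun i => (hZ i).of_le (by norm_num)) j _ l₂,
    sqFn_comm (fun i => (hZ i).of_le (by norm_num)) j _ l₃] at h
  linarith

end CrossDifferentiation

theorem square_fn_cross_differentiation_general_general (m : ℕ)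
    (U : Set (Fin (m + 1) → ℝ)) (hU : IsOpen U)
    (Z : Fin (m + 1) → (Fin (m + 1) → ℝ) → ℝ)
    (hZ : ∀ i, ContDiffOn ℝ 3 (Z i) U)
    (hJ : ∀ z ∈ U, jacDet m Z z ≠ 0) :
    ∀ (j l₁ l₂ l₃ : Fin (m + 1)), ∀ z ∈ U,
      pd m l₃ (sqFn m Z j l₁ l₂) z - pd m l₂ (sqFn m Z j l₁ l₃) z =
        -(∑ k : Fin (m + 1), sqFn m Z k l₁ l₂ z * sqFn m Z j l₃ k z) +
          ∑ k : Fin (m + 1), sqFn m Z k l₁ l₃ z * sqFn m Z j l₂ k z := by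
  intro j l₁ l₂ l₃ z hz
  exact pd_sqFn_sub_pd_sqFn (fun i => (hZ i).contDiffAt (hU.mem_nhds hz))
    (eventually_of_mem (hU.mem_nhds hz) hJ) j l₁ l₂ l₃

/-- Cross-differentiation identities for the square functions of a family
`Z = (X, Y¹, …, Y^m)` of C³ functions on an open set of `ℝ^{1+m}` with
nonvanishing Jacobian determinant. -/
theorem square_fn_cross_differentiation_general (m : ℕ) (hm : 1 ≤ m)
    (U : Set (Fin (m + 1) → ℝ)) (hU : IsOpen U)
    (Z : Fin (m + 1) → (Fin (m + 1) → ℝ) → ℝ)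
    (hZ : ∀ i, ContDiffOn ℝ 3 (Z i) U)
    (hJ : ∀ z ∈ U, jacDet m Z z ≠ 0) :
    ∀ (j l₁ l₂ l₃ : Fin (m + 1)), ∀ z ∈ U,
      pd m l₃ (sqFn m Z j l₁ l₂) z - pd m l₂ (sqFn m Z j l₁ l₃) z =
        -(∑ k : Fin (m + 1), sqFn m Z k l₁ l₂ z * sqFn m Z j l₃ k z) +
          ∑ k : Fin (m + 1), sqFn m Z k l₁ l₃ z * sqFn m Z j l₂ k z :=
  square_fn_cross_differentiation_general_general m U hU Z hZ hJ
end

section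
/- The following quadratic identity between m×m determinants holds: det M(D,E) · det M(C_{j₁}, C_{j₂}) = det M(D, C_{j₂}) · det M(C_{j₁}, E) − det M(E, C_{j₂}) · det M(C_{j₁}, D). -/
/-- `colRepMat C j₁ j₂ U V` is the `m×m` matrix whose `i`-th column is `C i` for
`i ∉ {j₁, j₂}`, whose `j₁`-th column is `U` and whose `j₂`-th column is `V`.
Here `C j i` denotes the `i`-th entry of the column `C j`. -/
def colRepMat {R : Type*} [CommRing R] {m : ℕ} (C : Fin m → Fin m → R)
    (j₁ j₂ : Fin m) (U V : Fin m → R) : Matrix (Fin m) (Fin m) R :=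
  Matrix.of fun i j => if j = j₁ then U i else if j = j₂ then V i else C j i

open Matrix

theorem key_field {K : Type*} [Field K] {m : ℕ} (A : Matrix (Fin m) (Fin m) K)
    (hA : A.det ≠ 0) (D E : Fin m → K) (j₁ j₂ : Fin m) (hj : j₁ ≠ j₂) :
    ((A.updateCol j₁ D).updateCol j₂ E).det * A.det =
      (A.updateCol j₁ D).det * (A.updateCol j₂ E).det -
        (A.updateCol j₁ E).det * (A.updateCol j₂ D).det := by
  have hu : IsUnit A.det := isUnit_iff_ne_zero.2 hA
  set B := (A.updateCol j₁ D).updateCol j₂ E with hB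
  set M := A⁻¹ * B with hMdef
  have hBj₁ : ∀ k, B k j₁ = D k := fun k => by
    simp [hB, Matrix.updateCol_apply, hj, Ne.symm hj]
  have hBj₂ : ∀ k, B k j₂ = E k := fun k => by
    simp [hB, Matrix.updateCol_apply]
  have hBo : ∀ k j, j ≠ j₁ → j ≠ j₂ → B k j = A k j := fun k j h1 h2 => by
    simp [hB, Matrix.updateCol_apply, h1, h2]
  have hAM : A * M = B := Matrix.mul_nonsing_inv_cancel_left A B hu
  have hadjM : A.adjugate * B = A.det • M := by
    rw [← hAM, ← Matrix.mul_assoc, Matrix.adjugate_mul, Matrix.smul_mul, Matrix.one_mul]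
  have hadj : ∀ i j, A.det * M i j = (A.adjugate * B) i j := by
    intro i j; rw [hadjM, Matrix.smul_apply, smul_eq_mul]
  have hc : ∀ i j (b : Fin m → K), (∀ k, B k j = b k) →
      (A.adjugate * B) i j = (A.updateCol i b).det := by
    intro i j b hb
    have h1 : (A.adjugate * B) i j = (A.adjugate *ᵥ b) i := by
      simp only [Matrix.mul_apply, Matrix.mulVec, dotProduct]
      exact Finset.sum_congr rfl fun k _ => by rw [hb k]
    rw [h1, ← Matrix.cramer_eq_adjugate_mulVec, Matrix.cramer_apply]
  -- rank-2 update structure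
  set U : Matrix (Fin m) (Fin 2) K := Matrix.of fun i t =>
    if t = 0 then M i j₁ - (1 : Matrix (Fin m) (Fin m) K) i j₁
    else M i j₂ - (1 : Matrix (Fin m) (Fin m) K) i j₂ with hU
  set V : Matrix (Fin 2) (Fin m) K := Matrix.of fun t j =>
    if j = (if t = 0 then j₁ else j₂) then 1 else 0 with hV
  have hMone : ∀ i j, j ≠ j₁ → j ≠ j₂ → M i j = (1 : Matrix (Fin m) (Fin m) K) i j := by
    intro i j h1 h2
    calc M i j = (A⁻¹ * A) i j := by
          simp only [hMdef, Matrix.mul_apply]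
          exact Finset.sum_congr rfl fun k _ => by rw [hBo k j h1 h2]
      _ = (1 : Matrix (Fin m) (Fin m) K) i j := by rw [Matrix.nonsing_inv_mul A hu]
  have hM : M = 1 + U * V := by
    ext i j
    simp only [Matrix.add_apply, Matrix.mul_apply, Fin.sum_univ_two, hU, hV, Matrix.of_apply]
    by_cases h1 : j = j₁
    · subst h1; simp [hj]
    · by_cases h2 : j = j₂
      · subst h2; simp [hj, Ne.symm hj]
      · simp [h1, h2, hMone i j h1 h2]
  have hVU : ∀ s t, (V * U) s t = U (if s = (0 : Fin 2) then j₁ else j₂) t := by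
    intro s t
    simp only [Matrix.mul_apply, hV, Matrix.of_apply, boole_mul]
    rw [Finset.sum_ite_eq' Finset.univ]
    simp
  have hdetB : B.det = A.det * M.det := by rw [← hAM, Matrix.det_mul]
  have e00 : ((1 + V * U : Matrix (Fin 2) (Fin 2) K) 0 0) = M j₁ j₁ := by
    rw [Matrix.add_apply, hVU]; simp [hU, Matrix.one_apply]
  have e01 : ((1 + V * U : Matrix (Fin 2) (Fin 2) K) 0 1) = M j₁ j₂ := by
    rw [Matrix.add_apply, hVU]; simp [hU, Matrix.one_apply, hj]
  have e10 : ((1 + V * U : Matrix (Fin 2) (Fin 2) K) 1 0) = M j₂ j₁ := by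
    rw [Matrix.add_apply, hVU]; simp [hU, Matrix.one_apply, Ne.symm hj]
  have e11 : ((1 + V * U : Matrix (Fin 2) (Fin 2) K) 1 1) = M j₂ j₂ := by
    rw [Matrix.add_apply, hVU]; simp [hU, Matrix.one_apply]
  have hdetM : M.det = M j₁ j₁ * M j₂ j₂ - M j₁ j₂ * M j₂ j₁ := by
    conv_lhs => rw [hM]
    rw [Matrix.det_one_add_mul_comm, Matrix.det_fin_two, e00, e01, e10, e11]
  calc B.det * A.det = (A.det * M j₁ j₁) * (A.det * M j₂ j₂)
        - (A.det * M j₁ j₂) * (A.det * M j₂ j₁) := by rw [hdetB, hdetM]; ring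
    _ = _ := by
        rw [hadj, hadj, hadj, hadj, hc j₁ j₁ D hBj₁, hc j₂ j₂ E hBj₂,
          hc j₁ j₂ E hBj₂, hc j₂ j₁ D hBj₁]

theorem key_comm {R : Type*} [CommRing R] {m : ℕ} (A : Matrix (Fin m) (Fin m) R)
    (D E : Fin m → R) (j₁ j₂ : Fin m) (hj : j₁ ≠ j₂) :
    ((A.updateCol j₁ D).updateCol j₂ E).det * A.det =
      (A.updateCol j₁ D).det * (A.updateCol j₂ E).det -
        (A.updateCol j₁ E).det * (A.updateCol j₂ D).det := by
  classical
  set σ := (Fin m × Fin m) ⊕ (Fin m ⊕ Fin m) with hσ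
  let P := MvPolynomial σ ℤ
  let K := FractionRing P
  let φ : P →+* K := algebraMap P K
  let A₀ : Matrix (Fin m) (Fin m) P := Matrix.of fun i j => MvPolynomial.X (Sum.inl (i, j))
  let D₀ : Fin m → P := fun i => MvPolynomial.X (Sum.inr (Sum.inl i))
  let E₀ : Fin m → P := fun i => MvPolynomial.X (Sum.inr (Sum.inr i))
  -- the generic matrix has nonzero determinant
  have hdet₀ : A₀.det ≠ 0 := by
    intro h0
    have h1 := congrArg (MvPolynomial.eval
      (Sum.elim (fun p : Fin m × Fin m => if p.1 = p.2 then (1 : ℤ) else 0) (fun _ => 0))) h0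
    rw [map_zero, RingHom.map_det] at h1
    have h2 : (MvPolynomial.eval
        (Sum.elim (fun p : Fin m × Fin m => if p.1 = p.2 then (1 : ℤ) else 0)
          (fun _ => 0))).mapMatrix A₀ = (1 : Matrix (Fin m) (Fin m) ℤ) := by
      ext i j
      simp [A₀, Matrix.one_apply]
    rw [h2, Matrix.det_one] at h1
    exact one_ne_zero h1
  -- the identity holds generically
  have hP : ((A₀.updateCol j₁ D₀).updateCol j₂ E₀).det * A₀.det =
      (A₀.updateCol j₁ D₀).det * (A₀.updateCol j₂ E₀).det -
        (A₀.updateCol j₁ E₀).det * (A₀.updateCol j₂ D₀).det := by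
    apply IsFractionRing.injective P K
    rw [_root_.map_mul, _root_.map_sub, _root_.map_mul, _root_.map_mul]
    simp only [RingHom.map_det, RingHom.mapMatrix_apply, Matrix.map_updateCol]
    exact key_field (A₀.map φ)
      (by rw [← RingHom.mapMatrix_apply, ← RingHom.map_det]
          exact fun h => hdet₀ ((map_eq_zero_iff φ (IsFractionRing.injective P K)).1 h))
      (φ ∘ D₀) (φ ∘ E₀) j₁ j₂ hj
  -- specialize to the given data
  let ρ : P →+* R := MvPolynomial.eval₂Hom (Int.castRingHom R)
    (Sum.elim (fun p : Fin m × Fin m => A p.1 p.2) (Sum.elim D E))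
  have h3 := congrArg ρ hP
  rw [_root_.map_mul, _root_.map_sub, _root_.map_mul, _root_.map_mul] at h3
  simp only [RingHom.map_det, RingHom.mapMatrix_apply, Matrix.map_updateCol] at h3
  have hA : A₀.map ρ = A := by ext i j; exact MvPolynomial.eval₂Hom_X' _ _ _
  have hD : ρ ∘ D₀ = D := by funext i; exact MvPolynomial.eval₂Hom_X' _ _ _
  have hE : ρ ∘ E₀ = E := by funext i; exact MvPolynomial.eval₂Hom_X' _ _ _
  rwa [hA, hD, hE] at h3

/-- Quadratic Plücker-type identity between `m×m` determinants obtained by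
replacing two fixed columns `j₁ < j₂` of a matrix by the vectors `D`, `E`. -/
theorem det_column_replacement_identity {R : Type*} [CommRing R] (m : ℕ)
    (hm : 2 ≤ m) (C : Fin m → Fin m → R) (D E : Fin m → R)
    (j₁ j₂ : Fin m) (h : j₁ < j₂) :
    (colRepMat C j₁ j₂ D E).det * (colRepMat C j₁ j₂ (C j₁) (C j₂)).det =
      (colRepMat C j₁ j₂ D (C j₂)).det * (colRepMat C j₁ j₂ (C j₁) E).det -
        (colRepMat C j₁ j₂ E (C j₂)).det * (colRepMat C j₁ j₂ (C j₁) D).det := by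
  have hj : j₁ ≠ j₂ := h.ne
  set A : Matrix (Fin m) (Fin m) R := colRepMat C j₁ j₂ (C j₁) (C j₂) with hA
  have key : ∀ U V : Fin m → R,
      colRepMat C j₁ j₂ U V = (A.updateCol j₁ U).updateCol j₂ V := by
    intro U V
    ext i j
    simp only [hA, colRepMat, Matrix.updateCol_apply, Matrix.of_apply]
    by_cases h1 : j = j₁
    · subst h1; simp [hj]
    · by_cases h2 : j = j₂ <;> simp [h1, h2, hj, Ne.symm hj]
  have h2 : ∀ U : Fin m → R, colRepMat C j₁ j₂ U (C j₂) = A.updateCol j₁ U := by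
    intro U
    rw [key]
    ext i j
    simp only [Matrix.updateCol_apply, hA, colRepMat, Matrix.of_apply]
    by_cases hb : j = j₂ <;> simp [hb, hj, Ne.symm hj]
  have h3 : ∀ V : Fin m → R, colRepMat C j₁ j₂ (C j₁) V = A.updateCol j₂ V := by
    intro V
    rw [key]
    ext i j
    simp only [Matrix.updateCol_apply, hA, colRepMat, Matrix.of_apply]
    by_cases hb : j = j₂
    · simp [hb]
    · by_cases hc : j = j₁ <;> simp [hb, hc, hj]
  rw [key D E, h2 D, h3 E, h2 E, h3 D]
  exact key_comm A D E j₁ j₂ hj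
end

section
/- Let m ≥ 1 and let F¹, …, F^m be real-analytic functions on a neighborhood of 0 in ℝ^{1+2m} (variables (x, y¹, …, y^m, p¹, …, p^m)). The following are equivalent. (a) There exist real-analytic functions X, Y¹, …, Y^m on a neighborhood of 0 in ℝ^{1+m}, whose Jacobian matrix at the origin is the identity, mapping the system y_xx^j = F^j(x, y, y_x) to the free-particle system Y_XX^j = 0 (in the jet sense of the context). (b) There exist real-analytic functions X, Y¹, …, Y^m on a neighborhood of 0 in ℝ^{1+m}, whose Jacobian matrix at the origin is the identity, such that for all (x, y, p) in a neighborhood of 0 and all j ∈ {1, …, m}: 0 = F^j(x,y,p) + □^j_{xx} + Σ_{l₁=1}^m p^{l₁}·( 2□^j_{x y^{l₁}} − δ^j_{l₁}·□⁰_{xx} ) + Σ_{l₁=1}^m Σ_{l₂=1}^m p^{l₁}p^{l₂}·( □^j_{y^{l₁}y^{l₂}} − δ^j_{l₁}·□⁰_{x y^{l₂}} − δ^j_{l₂}·□⁰_{x y^{l₁}} ) − p^j·Σ_{l₁=1}^m Σ_{l₂=1}^m p^{l₁}p^{l₂}·□⁰_{y^{l₁}y^{l₂}}, where the square functions of (X,Y)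 are evaluated at (x,y), δ is the Kronecker delta, and □^k_{xx} := □^k_{y⁰y⁰}, □^k_{x y^l} := □^k_{y⁰ y^l}. -/
/-- `DX = X_x + Σ_l p^l X_{y^l}`. -/
noncomputable def Dop (m : ℕ) (X : (Fin (m + 1) → ℝ) → ℝ) (z : Fin (m + 1) → ℝ)
    (p : Fin m → ℝ) : ℝ :=
  pd m 0 X z + ∑ l : Fin m, p l * pd m l.succ X z

/-- `DDX = X_xx + 2 Σ_l p^l X_{x y^l} + Σ_{l₁,l₂} p^{l₁} p^{l₂} X_{y^{l₁}y^{l₂}}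
  + Σ_l q^l X_{y^l}`. -/
noncomputable def DDop (m : ℕ) (X : (Fin (m + 1) → ℝ) → ℝ) (z : Fin (m + 1) → ℝ)
    (p q : Fin m → ℝ) : ℝ :=
  pd m 0 (pd m 0 X) z + 2 * ∑ l : Fin m, p l * pd m l.succ (pd m 0 X) z
    + ∑ l₁ : Fin m, ∑ l₂ : Fin m, p l₁ * p l₂ * pd m l₂.succ (pd m l₁.succ X) z
    + ∑ l : Fin m, q l * pd m l.succ X z

/-- `(X, Y¹, …, Y^m) = (Z 0, Z 1, …, Z m)` maps the system `y_xx^j = F^j(x,y,y_x)`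
to the free-particle system `Y_XX^j = 0`: its Jacobian matrix at the origin is the
identity and `DX·DDY^j − DY^j·DDX = 0` on a neighborhood of `0` in the first-order
jet space, with `q = F(x,y,p)`. -/
def MapsToFree (m : ℕ) (F : Fin m → ((Fin (m + 1) → ℝ) × (Fin m → ℝ)) → ℝ)
    (Z : Fin (m + 1) → (Fin (m + 1) → ℝ) → ℝ) : Prop :=
  (∀ i j : Fin (m + 1), pd m j (Z i) 0 = if i = j then 1 else 0) ∧
  ∃ V ∈ nhds (0 : (Fin (m + 1) → ℝ) × (Fin m → ℝ)), ∀ w ∈ V, ∀ j : Fin m,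
    Dop m (Z 0) w.1 w.2 * DDop m (Z j.succ) w.1 w.2 (fun l => F l w)
      - Dop m (Z j.succ) w.1 w.2 * DDop m (Z 0) w.1 w.2 (fun l => F l w) = 0

open Finset Matrix Topology

section JetAlgebra

variable {R M N : Type*} [CommSemiring R] [AddCommMonoid M] [Module R M]
  [AddCommMonoid N] [Module R N] {m : ℕ}

/-- The part of `DD` free of `q`, with `T a b` in place of the second partial `∂_b ∂_a`. -/
def jetQuadratic (p : Fin m → R) (T : Fin (m + 1) → Fin (m + 1) → M) : M :=
  T 0 0 + (2 : R) • ∑ l, p l • T 0 l.succ + ∑ l₁, ∑ l₂, (p l₁ * p l₂) • T l₁.succ l₂.succ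

theorem map_jetQuadratic (f : M →ₗ[R] N) (p : Fin m → R) (T : Fin (m + 1) → Fin (m + 1) → M) :
    f (jetQuadratic p T) = jetQuadratic p fun a b => f (T a b) := by
  simp [jetQuadratic, map_sum]

end JetAlgebra

theorem squareForm_eq_jetQuadratic {R : Type*} [CommRing R] {m : ℕ} (p q : Fin m → R)
    (σ : Fin (m + 1) → Fin (m + 1) → Fin (m + 1) → R) (j : Fin m) :
    q j + σ j.succ 0 0
        + ∑ l₁ : Fin m, p l₁ * (2 * σ j.succ 0 l₁.succ - (if l₁ = j then 1 else 0) * σ 0 0 0)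
        + ∑ l₁ : Fin m, ∑ l₂ : Fin m, p l₁ * p l₂ *
            (σ j.succ l₁.succ l₂.succ
              - (if l₁ = j then 1 else 0) * σ 0 0 l₂.succ
              - (if l₂ = j then 1 else 0) * σ 0 0 l₁.succ)
        - p j * ∑ l₁ : Fin m, ∑ l₂ : Fin m, p l₁ * p l₂ * σ 0 l₁.succ l₂.succ
      = q j + jetQuadratic p (σ j.succ) - p j * jetQuadratic p (σ 0) := by
  simp only [jetQuadratic, smul_eq_mul, mul_sub, sum_sub_distrib, ite_mul, mul_ite, one_mul,
    zero_mul, mul_zero, sum_ite_eq', sum_ite_irrel, sum_const_zero, mem_univ, if_true, mul_add,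
    mul_sum]
  ring_nf
  simp only [sum_mul]
  ring

section LinearAlgebra

variable {K : Type*} [Field K] {m : ℕ}

theorem cross_eq_zero_iff_exists_smul {u v : Fin (m + 1) → K} (hv : v 0 ≠ 0) :
    (∀ j : Fin m, v 0 * u j.succ - v j.succ * u 0 = 0) ↔ ∃ μ : K, u = μ • v := by
  refine ⟨fun h => ⟨u 0 / v 0, funext fun i => ?_⟩, ?_⟩
  · induction i using Fin.cases with
    | zero => simp only [Pi.smul_apply, smul_eq_mul]; field_simp
    | succ j => simp only [Pi.smul_apply, smul_eq_mul]; field_simp; linear_combination h j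
  · rintro ⟨μ, rfl⟩ j
    simp only [Pi.smul_apply, smul_eq_mul]
    ring

theorem exists_add_cons_eq_smul_cons_iff (c : Fin (m + 1) → K) (p q : Fin m → K) :
    (∃ μ : K, c + Fin.cons 0 q = μ • (Fin.cons 1 p : Fin (m + 1) → K))
      ↔ ∀ j, 0 = q j + c j.succ - p j * c 0 := by
  refine ⟨fun ⟨μ, h⟩ j => ?_, fun h => ⟨c 0, funext fun i => ?_⟩⟩
  · have h0 := congrFun h 0
    have hj := congrFun h j.succ
    simp only [Pi.add_apply, Pi.smul_apply, smul_eq_mul, Fin.cons_zero, Fin.cons_succ] at h0 hj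
    linear_combination p j * h0 - hj
  · induction i using Fin.cases with
    | zero => simp
    | succ j =>
      simp only [Pi.add_apply, Pi.smul_apply, smul_eq_mul, Fin.cons_succ]
      linear_combination -h j

theorem exists_add_mulVec_eq_smul_mulVec_iff {n : Type*} [Fintype n] [DecidableEq n]
    {A : Matrix n n K} (hA : IsUnit A.det) (b x y : n → K) :
    (∃ μ : K, b + A *ᵥ x = μ • A *ᵥ y) ↔ ∃ μ : K, A⁻¹ *ᵥ b + x = μ • y := by
  have hinj : Function.Injective A.mulVec :=
    mulVec_injective_iff_isUnit.mpr ((isUnit_iff_isUnit_det A).mpr hA)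
  have hb : b + A *ᵥ x = A *ᵥ (A⁻¹ *ᵥ b + x) := by
    rw [mulVec_add, mulVec_mulVec, mul_nonsing_inv A hA, one_mulVec]
  simp only [hb, ← mulVec_smul, hinj.eq_iff]

theorem cross_jet_eq_zero_iff {A : Matrix (Fin (m + 1)) (Fin (m + 1)) K} (hA : IsUnit A.det)
    (b : Fin (m + 1) → K) (p q : Fin m → K) (hp : (A *ᵥ Fin.cons 1 p) 0 ≠ 0) :
    (∀ j : Fin m, (A *ᵥ Fin.cons 1 p) 0 * (b + A *ᵥ Fin.cons 0 q) j.succ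
        - (A *ᵥ Fin.cons 1 p) j.succ * (b + A *ᵥ Fin.cons 0 q) 0 = 0)
      ↔ ∀ j, 0 = q j + (A⁻¹ *ᵥ b) j.succ - p j * (A⁻¹ *ᵥ b) 0 := by
  rw [cross_eq_zero_iff_exists_smul hp, exists_add_mulVec_eq_smul_mulVec_iff hA,
    exists_add_cons_eq_smul_cons_iff]

/-- Cramer's rule; when `A` is singular both sides are junk `0`. -/
theorem inv_mulVec_apply {n : Type*} [Fintype n] [DecidableEq n] (A : Matrix n n K)
    (b : n → K) (k : n) :
    (A⁻¹ *ᵥ b) k = (A.updateCol k b).det / A.det := by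
  rw [Matrix.inv_def, Ring.inverse_eq_inv', smul_mulVec, ← cramer_eq_adjugate_mulVec,
    Pi.smul_apply, cramer_apply, smul_eq_mul, div_eq_inv_mul]

end LinearAlgebra

section SquareFunctions

variable (m : ℕ) (Z : Fin (m + 1) → (Fin (m + 1) → ℝ) → ℝ) (z : Fin (m + 1) → ℝ)

noncomputable def jacMatrix : Matrix (Fin (m + 1)) (Fin (m + 1)) ℝ :=
  Matrix.of fun i j => pd m j (Z i) z

noncomputable def secondPartials (a b : Fin (m + 1)) : Fin (m + 1) → ℝ :=
  fun i => pd m b (pd m a (Z i)) z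

theorem jacDet_eq_det_jacMatrix : jacDet m Z z = (jacMatrix m Z z).det := rfl

theorem Dop_eq_jacMatrix_mulVec (p : Fin m → ℝ) (i : Fin (m + 1)) :
    Dop m (Z i) z p = (jacMatrix m Z z *ᵥ Fin.cons 1 p) i := by
  simp [Dop, jacMatrix, mulVec, dotProduct, Fin.sum_univ_succ, mul_comm]

theorem DDop_eq_jetQuadratic_add_jacMatrix_mulVec (p q : Fin m → ℝ) (i : Fin (m + 1)) :
    DDop m (Z i) z p q
      = (jetQuadratic p (secondPartials m Z z) + jacMatrix m Z z *ᵥ Fin.cons 0 q) i := by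
  simp [DDop, jetQuadratic, secondPartials, jacMatrix, mulVec, dotProduct, Fin.sum_univ_succ,
    mul_comm]

theorem sqFn_eq_inv_jacMatrix_mulVec (k a b : Fin (m + 1)) :
    sqFn m Z k a b z = ((jacMatrix m Z z)⁻¹ *ᵥ secondPartials m Z z a b) k := by
  rw [inv_mulVec_apply, sqFn, jacDetRep, jacDet]
  congr 2
  ext i j
  by_cases h : j = k <;> simp [jacMatrix, secondPartials, h]

theorem jetQuadratic_sqFn (p : Fin m → ℝ) (k : Fin (m + 1)) :
    jetQuadratic p (fun a b => sqFn m Z k a b z)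
      = ((jacMatrix m Z z)⁻¹ *ᵥ jetQuadratic p (secondPartials m Z z)) k := by
  simp only [sqFn_eq_inv_jacMatrix_mulVec]
  exact (map_jetQuadratic (LinearMap.proj k ∘ₗ (jacMatrix m Z z)⁻¹.mulVecLin) p _).symm

theorem freeParticle_condition_iff_squareForm (p q : Fin m → ℝ) (hdet : jacDet m Z z ≠ 0)
    (hD : Dop m (Z 0) z p ≠ 0) :
    (∀ j : Fin m, Dop m (Z 0) z p * DDop m (Z j.succ) z p q
        - Dop m (Z j.succ) z p * DDop m (Z 0) z p q = 0)
      ↔ ∀ j : Fin m, (0 : ℝ) = q j + sqFn m Z j.succ 0 0 z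
          + ∑ l₁ : Fin m, p l₁ *
              (2 * sqFn m Z j.succ 0 l₁.succ z
                - (if l₁ = j then 1 else 0) * sqFn m Z 0 0 0 z)
          + ∑ l₁ : Fin m, ∑ l₂ : Fin m, p l₁ * p l₂ *
              (sqFn m Z j.succ l₁.succ l₂.succ z
                - (if l₁ = j then 1 else 0) * sqFn m Z 0 0 l₂.succ z
                - (if l₂ = j then 1 else 0) * sqFn m Z 0 0 l₁.succ z)
          - p j * ∑ l₁ : Fin m, ∑ l₂ : Fin m, p l₁ * p l₂ *
              sqFn m Z 0 l₁.succ l₂.succ z := by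
  simp only [squareForm_eq_jetQuadratic p q (fun k a b => sqFn m Z k a b z), jetQuadratic_sqFn,
    Dop_eq_jacMatrix_mulVec, DDop_eq_jetQuadratic_add_jacMatrix_mulVec]
  rw [Dop_eq_jacMatrix_mulVec] at hD
  exact cross_jet_eq_zero_iff (isUnit_iff_ne_zero.mpr hdet) _ p q hD

end SquareFunctions

theorem AnalyticAt.continuousAt_pd {m : ℕ} {f : (Fin (m + 1) → ℝ) → ℝ} {z : Fin (m + 1) → ℝ}
    (hf : AnalyticAt ℝ f z) (i : Fin (m + 1)) : ContinuousAt (pd m i f) z :=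
  (ContinuousLinearMap.apply ℝ ℝ (Pi.single i 1)).continuous.continuousAt.comp
    hf.fderiv.continuousAt

theorem eventually_jacDet_ne_zero_and_Dop_ne_zero {m : ℕ}
    {Z : Fin (m + 1) → (Fin (m + 1) → ℝ) → ℝ} (hZ : ∀ i, AnalyticAt ℝ (Z i) 0)
    (hid : ∀ i j : Fin (m + 1), pd m j (Z i) 0 = if i = j then 1 else 0) :
    ∀ᶠ w : (Fin (m + 1) → ℝ) × (Fin m → ℝ) in 𝓝 0,
      jacDet m Z w.1 ≠ 0 ∧ Dop m (Z 0) w.1 w.2 ≠ 0 := by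
  have hpd : ∀ i k,
      ContinuousAt (fun w : (Fin (m + 1) → ℝ) × (Fin m → ℝ) => pd m k (Z i) w.1) 0 :=
    fun i k => ContinuousAt.comp (g := pd m k (Z i)) (f := Prod.fst)
      (x := (0 : (Fin (m + 1) → ℝ) × (Fin m → ℝ))) ((hZ i).continuousAt_pd k) continuousAt_fst
  have hdet : ContinuousAt (fun w : (Fin (m + 1) → ℝ) × (Fin m → ℝ) => jacDet m Z w.1) 0 :=
    continuous_id.matrix_det.continuousAt.comp
      (continuousAt_pi.2 fun i => continuousAt_pi.2 fun j => hpd i j)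
  have hD :
      ContinuousAt (fun w : (Fin (m + 1) → ℝ) × (Fin m → ℝ) => Dop m (Z 0) w.1 w.2) 0 := by
    unfold Dop
    fun_prop
  have hJ0 : jacMatrix m Z 0 = 1 := by
    ext i j
    simp [jacMatrix, hid, one_apply]
  refine (hdet.eventually_ne ?_).and (hD.eventually_ne ?_)
  · simp [jacDet_eq_det_jacMatrix, hJ0]
  · simp [Dop_eq_jacMatrix_mulVec, hJ0]

theorem system_equiv_flat_iff_square_form_general (m : ℕ)
    (F : Fin m → ((Fin (m + 1) → ℝ) × (Fin m → ℝ)) → ℝ) :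
    (∃ Z : Fin (m + 1) → (Fin (m + 1) → ℝ) → ℝ,
      (∃ W ∈ nhds (0 : Fin (m + 1) → ℝ), ∀ i, AnalyticOnNhd ℝ (Z i) W) ∧
      MapsToFree m F Z)
    ↔
    (∃ Z : Fin (m + 1) → (Fin (m + 1) → ℝ) → ℝ,
      (∃ W ∈ nhds (0 : Fin (m + 1) → ℝ), ∀ i, AnalyticOnNhd ℝ (Z i) W) ∧
      (∀ i j : Fin (m + 1), pd m j (Z i) 0 = if i = j then 1 else 0) ∧
      ∃ V ∈ nhds (0 : (Fin (m + 1) → ℝ) × (Fin m → ℝ)), ∀ w ∈ V, ∀ j : Fin m,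
        (0 : ℝ) = F j w + sqFn m Z j.succ 0 0 w.1
          + ∑ l₁ : Fin m, w.2 l₁ *
              (2 * sqFn m Z j.succ 0 l₁.succ w.1
                - (if l₁ = j then 1 else 0) * sqFn m Z 0 0 0 w.1)
          + ∑ l₁ : Fin m, ∑ l₂ : Fin m, w.2 l₁ * w.2 l₂ *
              (sqFn m Z j.succ l₁.succ l₂.succ w.1
                - (if l₁ = j then 1 else 0) * sqFn m Z 0 0 l₂.succ w.1
                - (if l₂ = j then 1 else 0) * sqFn m Z 0 0 l₁.succ w.1)
          - w.2 j * ∑ l₁ : Fin m, ∑ l₂ : Fin m, w.2 l₁ * w.2 l₂ *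
              sqFn m Z 0 l₁.succ l₂.succ w.1) := by
  refine exists_congr fun Z => and_congr_right fun ⟨W, hW, hZ⟩ => ?_
  refine and_congr_right fun hid => ?_
  have hnondeg :=
    eventually_jacDet_ne_zero_and_Dop_ne_zero (fun i => hZ i 0 (mem_of_mem_nhds hW)) hid
  simp only [← Filter.eventually_iff_exists_mem]
  exact Filter.eventually_congr <| hnondeg.mono fun w ⟨hdet, hD⟩ =>
    freeParticle_condition_iff_squareForm m Z w.1 w.2 (fun l => F l w) hdet hD

/-- A system `y_xx^j = F^j(x,y,y_x)` is taken to the free particle system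
`Y_XX^j = 0` by a point transformation `(X,Y)` tangent to the identity at `0`
if and only if it can be written in the explicit square-function form. -/
theorem system_equiv_flat_iff_square_form (m : ℕ) (hm : 1 ≤ m)
    (F : Fin m → ((Fin (m + 1) → ℝ) × (Fin m → ℝ)) → ℝ)
    (VF : Set ((Fin (m + 1) → ℝ) × (Fin m → ℝ)))
    (hVF : VF ∈ nhds (0 : (Fin (m + 1) → ℝ) × (Fin m → ℝ)))
    (hF : ∀ j, AnalyticOnNhd ℝ (F j) VF) :
    (∃ Z : Fin (m + 1) → (Fin (m + 1) → ℝ) → ℝ,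
      (∃ W ∈ nhds (0 : Fin (m + 1) → ℝ), ∀ i, AnalyticOnNhd ℝ (Z i) W) ∧
      MapsToFree m F Z)
    ↔
    (∃ Z : Fin (m + 1) → (Fin (m + 1) → ℝ) → ℝ,
      (∃ W ∈ nhds (0 : Fin (m + 1) → ℝ), ∀ i, AnalyticOnNhd ℝ (Z i) W) ∧
      (∀ i j : Fin (m + 1), pd m j (Z i) 0 = if i = j then 1 else 0) ∧
      ∃ V ∈ nhds (0 : (Fin (m + 1) → ℝ) × (Fin m → ℝ)), ∀ w ∈ V, ∀ j : Fin m,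
        (0 : ℝ) = F j w + sqFn m Z j.succ 0 0 w.1
          + ∑ l₁ : Fin m, w.2 l₁ *
              (2 * sqFn m Z j.succ 0 l₁.succ w.1
                - (if l₁ = j then 1 else 0) * sqFn m Z 0 0 0 w.1)
          + ∑ l₁ : Fin m, ∑ l₂ : Fin m, w.2 l₁ * w.2 l₂ *
              (sqFn m Z j.succ l₁.succ l₂.succ w.1
                - (if l₁ = j then 1 else 0) * sqFn m Z 0 0 l₂.succ w.1
                - (if l₂ = j then 1 else 0) * sqFn m Z 0 0 l₁.succ w.1)
          - w.2 j * ∑ l₁ : Fin m, ∑ l₂ : Fin m, w.2 l₁ * w.2 l₂ *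
              sqFn m Z 0 l₁.succ l₂.succ w.1) :=
  system_equiv_flat_iff_square_form_general m F
end

section
/- Assume Δ ≠ 0 and DX ≠ 0. Then q ∈ K^m satisfies the m equations DX·DDY^j − DY^j·DDX = 0 (j = 1, …, m) if and only if, for every j ∈ {1, …, m}: 0 = q^j·Δ + Δ(⋯|^j xx|⋯) + Σ_{l₁=1}^m p^{l₁}·( 2Δ(⋯|^j x y^{l₁}|⋯) − δ^j_{l₁}·Δ(⋯|⁰ xx|⋯) ) + Σ_{l₁=1}^m Σ_{l₂=1}^m p^{l₁}p^{l₂}·( Δ(⋯|^j y^{l₁}y^{l₂}|⋯) − 2δ^j_{l₁}·Δ(⋯|⁰ x y^{l₂}|⋯) ) − Σ_{l₁=1}^m Σ_{l₂=1}^m Σ_{l₃=1}^m p^{l₁}p^{l₂}p^{l₃}·δ^j_{l₁}·Δ(⋯|⁰ y^{l₂}y^{l₃}|⋯), where δ is the Kronecker delta. -/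
/-!
Write `M` for the matrix of first-jet values, `π = (1, p)` and `v = (DDX, DDY¹, …, DDY^m)`.
Then `M π = (DX, DY¹, …, DY^m)`, and the `m` equations say that `v` is proportional to `M π`
(as `DX ≠ 0`). Since `M` is invertible, this means that the Cramer solution of `M x = v` is
proportional to `π`, i.e. `x_{j} = x_0 p^j`. Splitting `v` into the quadratic part
`Σ π^{l₁} π^{l₂} (X_{y^{l₁}y^{l₂}}, Y_{y^{l₁}y^{l₂}})` and `M (0, q)`, Cramer's rule gives
`Δ x_k = Σ π^{l₁} π^{l₂} Δ(⋯|^k y^{l₁}y^{l₂}|⋯) + Δ (0, q)_k`, and the stated formula is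
`Δ (x_j − x_0 p^j)` written out using the symmetry of the second-jet values.
-/

namespace Stmt8

variable {K : Type*} [Field K]

/-- Extended jet coordinates `(p⁰, p¹, …, p^m)` with the convention `p⁰ = 1`. -/
def pp (m : ℕ) (p : Fin m → K) : Fin (m + 1) → K := Fin.cons 1 p

/-- `DX = Σ_{l=0}^m p^l X_{y^l}`. -/
def DX (m : ℕ) (a : Fin (m + 1) → K) (p : Fin m → K) : K :=
  ∑ l : Fin (m + 1), pp m p l * a l

/-- `DDX = Σ_{l₁,l₂=0}^m p^{l₁}p^{l₂} X_{y^{l₁}y^{l₂}} + Σ_{l=1}^m q^l X_{y^l}`. -/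
def DDX (m : ℕ) (a : Fin (m + 1) → K) (A2 : Fin (m + 1) → Fin (m + 1) → K)
    (p q : Fin m → K) : K :=
  (∑ l₁ : Fin (m + 1), ∑ l₂ : Fin (m + 1), pp m p l₁ * pp m p l₂ * A2 l₁ l₂)
    + ∑ l : Fin m, q l * a l.succ

/-- The fundamental determinant `Δ`, whose row `0` is `(X_{y⁰}, …, X_{y^m})` and
whose row `j+1` is `(Y^{j+1}_{y⁰}, …, Y^{j+1}_{y^m})`. -/
def Δfund (m : ℕ) (a : Fin (m + 1) → K) (b : Fin m → Fin (m + 1) → K) : K :=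
  (Matrix.of (Fin.cons a b : Fin (m + 1) → Fin (m + 1) → K)).det

/-- The determinant `Δ(⋯|^k y^{l₁}y^{l₂}|⋯)`, obtained from `Δ` by replacing its
`k`-th column by the column of second-jet values with lower indices `(l₁, l₂)`. -/
def Δrep (m : ℕ) (a : Fin (m + 1) → K) (b : Fin m → Fin (m + 1) → K)
    (A2 : Fin (m + 1) → Fin (m + 1) → K) (B2 : Fin m → Fin (m + 1) → Fin (m + 1) → K)
    (k l₁ l₂ : Fin (m + 1)) : K :=
  (Matrix.of fun i j =>
    if j = k then (Fin.cons (A2 l₁ l₂) (fun r => B2 r l₁ l₂) : Fin (m + 1) → K) i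
    else (Fin.cons a b : Fin (m + 1) → Fin (m + 1) → K) i j).det

end Stmt8

namespace Fin

theorem exists_eq_smul_iff_forall_succ {R : Type*} [Semiring R] {n : ℕ} {u : Fin (n + 1) → R}
    (hu : u 0 = 1) (x : Fin (n + 1) → R) :
    (∃ c : R, x = c • u) ↔ ∀ j : Fin n, x j.succ = x 0 * u j.succ := by
  constructor
  · rintro ⟨c, rfl⟩ j
    simp [hu]
  · intro h
    refine ⟨x 0, funext fun i => i.cases ?_ fun j => ?_⟩
    · simp [hu]
    · simp [h j]

theorem forall_cross_eq_zero_iff_exists_eq_smul {K : Type*} [Field K] {n : ℕ}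
    {w : Fin (n + 1) → K} (hw : w 0 ≠ 0) (v : Fin (n + 1) → K) :
    (∀ j : Fin n, w 0 * v j.succ - w j.succ * v 0 = 0) ↔ ∃ c : K, v = c • w := by
  constructor
  · intro h
    refine ⟨v 0 / w 0, funext fun i => i.cases ?_ fun j => ?_⟩ <;>
      simp only [Pi.smul_apply, smul_eq_mul] <;> field_simp
    linear_combination h j
  · rintro ⟨c, rfl⟩ j
    simp only [Pi.smul_apply, smul_eq_mul]
    ring

end Fin

namespace Matrix

variable {n : Type*} [Fintype n] [DecidableEq n]

theorem cramer_mulVec {R : Type*} [CommRing R] (A : Matrix n n R) (u : n → R) :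
    A.cramer (A *ᵥ u) = A.det • u := by
  rw [cramer_eq_adjugate_mulVec, mulVec_mulVec, adjugate_mul, smul_mulVec, one_mulVec]

theorem exists_eq_smul_mulVec_iff_exists_cramer_eq_smul {K : Type*} [Field K]
    {A : Matrix n n K} (hA : A.det ≠ 0) (u v : n → K) :
    (∃ c : K, v = c • (A *ᵥ u)) ↔ ∃ c : K, A.cramer v = c • u := by
  constructor
  · rintro ⟨c, rfl⟩
    exact ⟨c * A.det, by rw [map_smul, cramer_mulVec, smul_smul]⟩
  · rintro ⟨c, hc⟩
    refine ⟨A.det⁻¹ * c, ?_⟩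
    calc v = A.det⁻¹ • (A *ᵥ A.cramer v) := by rw [mulVec_cramer, inv_smul_smul₀ hA]
      _ = (A.det⁻¹ * c) • (A *ᵥ u) := by rw [hc, mulVec_smul, smul_smul]

theorem forall_cross_mulVec_eq_zero_iff {K : Type*} [Field K] {d : ℕ}
    {A : Matrix (Fin (d + 1)) (Fin (d + 1)) K} (hA : A.det ≠ 0) {u : Fin (d + 1) → K}
    (hu : u 0 = 1) (hAu : (A *ᵥ u) 0 ≠ 0) (v : Fin (d + 1) → K) :
    (∀ j : Fin d, (A *ᵥ u) 0 * v j.succ - (A *ᵥ u) j.succ * v 0 = 0) ↔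
      ∀ j : Fin d, A.cramer v j.succ = A.cramer v 0 * u j.succ :=
  (Fin.forall_cross_eq_zero_iff_exists_eq_smul hAu v).trans <|
    (exists_eq_smul_mulVec_iff_exists_cramer_eq_smul hA u v).trans
      (Fin.exists_eq_smul_iff_forall_succ hu _)

end Matrix

namespace Stmt8

variable {K : Type*} [Field K]

section Jets

variable {m : ℕ}

@[simp]
theorem pp_succ (p : Fin m → K) (j : Fin m) : pp m p j.succ = p j := rfl

theorem sum_pp_mul_pp_of_symm (p : Fin m → K) {f : Fin (m + 1) → Fin (m + 1) → K}
    (hf : ∀ l₁ l₂, f l₁ l₂ = f l₂ l₁) :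
    ∑ l₁ : Fin (m + 1), ∑ l₂ : Fin (m + 1), pp m p l₁ * pp m p l₂ * f l₁ l₂ =
      f 0 0 + 2 * ∑ l : Fin m, p l * f 0 l.succ
        + ∑ l₁ : Fin m, ∑ l₂ : Fin m, p l₁ * p l₂ * f l₁.succ l₂.succ := by
  simp only [pp, Fin.sum_univ_succ, Fin.cons_zero, Fin.cons_succ, one_mul, mul_one,
    Finset.sum_add_distrib, hf _ 0]
  ring

theorem sum_kronecker_eq (p : Fin m → K) (D : Fin (m + 1) → Fin (m + 1) → Fin (m + 1) → K)
    (j : Fin m) :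
    D j.succ 0 0
        + ∑ l₁ : Fin m, p l₁ *
            (2 * D j.succ 0 l₁.succ - (if l₁ = j then 1 else 0) * D 0 0 0)
        + ∑ l₁ : Fin m, ∑ l₂ : Fin m, p l₁ * p l₂ *
            (D j.succ l₁.succ l₂.succ - 2 * (if l₁ = j then 1 else 0) * D 0 0 l₂.succ)
        - ∑ l₁ : Fin m, ∑ l₂ : Fin m, ∑ l₃ : Fin m,
            p l₁ * p l₂ * p l₃ * (if l₁ = j then 1 else 0) * D 0 l₂.succ l₃.succ =
      (D j.succ 0 0 + 2 * ∑ l : Fin m, p l * D j.succ 0 l.succ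
        + ∑ l₁ : Fin m, ∑ l₂ : Fin m, p l₁ * p l₂ * D j.succ l₁.succ l₂.succ)
      - p j * (D 0 0 0 + 2 * ∑ l : Fin m, p l * D 0 0 l.succ
        + ∑ l₁ : Fin m, ∑ l₂ : Fin m, p l₁ * p l₂ * D 0 l₁.succ l₂.succ) := by
  simp only [mul_sub, Finset.sum_sub_distrib, mul_ite, ite_mul, mul_one, mul_zero, zero_mul,
    Finset.sum_ite_irrel, Finset.sum_const_zero, Finset.sum_ite_eq', Finset.mem_univ, if_true,
    mul_add, Finset.mul_sum]
  ring_nf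

variable (m) in
def jetMatrix (a : Fin (m + 1) → K) (b : Fin m → Fin (m + 1) → K) :
    Matrix (Fin (m + 1)) (Fin (m + 1)) K :=
  Matrix.of (Fin.cons a b : Fin (m + 1) → Fin (m + 1) → K)

variable (m) in
def secondJetCol (A2 : Fin (m + 1) → Fin (m + 1) → K)
    (B2 : Fin m → Fin (m + 1) → Fin (m + 1) → K) (l₁ l₂ : Fin (m + 1)) : Fin (m + 1) → K :=
  Fin.cons (A2 l₁ l₂) fun r => B2 r l₁ l₂

open Matrix

variable (a : Fin (m + 1) → K) (b : Fin m → Fin (m + 1) → K)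
  (A2 : Fin (m + 1) → Fin (m + 1) → K) (B2 : Fin m → Fin (m + 1) → Fin (m + 1) → K)
  (p q : Fin m → K)

theorem jetMatrix_mulVec_pp :
    jetMatrix m a b *ᵥ pp m p = Fin.cons (DX m a p) fun j => DX m (b j) p := by
  ext i
  refine i.cases ?_ fun j => ?_ <;> simp [jetMatrix, mulVec, dotProduct, DX, mul_comm]

theorem Δrep_eq_cramer (k l₁ l₂ : Fin (m + 1)) :
    Δrep m a b A2 B2 k l₁ l₂ = (jetMatrix m a b).cramer (secondJetCol m A2 B2 l₁ l₂) k := by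
  rw [cramer_apply, Δrep]
  congr 1
  ext i i'
  simp [updateCol_apply, jetMatrix, secondJetCol]

theorem cons_DDX_eq :
    (Fin.cons (DDX m a A2 p q) fun j => DDX m (b j) (B2 j) p q : Fin (m + 1) → K) =
      ∑ l₁ : Fin (m + 1), ∑ l₂ : Fin (m + 1),
          (pp m p l₁ * pp m p l₂) • secondJetCol m A2 B2 l₁ l₂
        + jetMatrix m a b *ᵥ Fin.cons 0 q := by
  ext i
  refine i.cases ?_ fun j => ?_ <;>
    simp [DDX, secondJetCol, jetMatrix, mulVec, dotProduct, Fin.sum_univ_succ, Finset.sum_apply,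
      mul_comm]

theorem cramer_cons_DDX (k : Fin (m + 1)) :
    (jetMatrix m a b).cramer (Fin.cons (DDX m a A2 p q) fun j => DDX m (b j) (B2 j) p q) k =
      ∑ l₁ : Fin (m + 1), ∑ l₂ : Fin (m + 1), pp m p l₁ * pp m p l₂ * Δrep m a b A2 B2 k l₁ l₂
        + Δfund m a b * (Fin.cons 0 q : Fin (m + 1) → K) k := by
  simp only [cons_DDX_eq, map_add, map_sum, map_smul, cramer_mulVec, Pi.add_apply,
    Finset.sum_apply, Pi.smul_apply, smul_eq_mul, Δrep_eq_cramer]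
  rfl

theorem Δrep_comm (hA2 : ∀ l₁ l₂, A2 l₁ l₂ = A2 l₂ l₁)
    (hB2 : ∀ j l₁ l₂, B2 j l₁ l₂ = B2 j l₂ l₁) (k l₁ l₂ : Fin (m + 1)) :
    Δrep m a b A2 B2 k l₁ l₂ = Δrep m a b A2 B2 k l₂ l₁ := by
  simp only [Δrep, hA2 l₁ l₂, hB2 _ l₁ l₂]

end Jets

theorem solve_second_jet_general (m : ℕ)
    (a : Fin (m + 1) → K) (b : Fin m → Fin (m + 1) → K)
    (A2 : Fin (m + 1) → Fin (m + 1) → K)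
    (B2 : Fin m → Fin (m + 1) → Fin (m + 1) → K)
    (hA2 : ∀ l₁ l₂, A2 l₁ l₂ = A2 l₂ l₁)
    (hB2 : ∀ j l₁ l₂, B2 j l₁ l₂ = B2 j l₂ l₁)
    (p : Fin m → K)
    (hΔ : Δfund m a b ≠ 0) (hDX : DX m a p ≠ 0) (q : Fin m → K) :
    (∀ j : Fin m,
        DX m a p * DDX m (b j) (B2 j) p q - DX m (b j) p * DDX m a A2 p q = 0)
    ↔
    (∀ j : Fin m,
      (0 : K) = q j * Δfund m a b + Δrep m a b A2 B2 j.succ 0 0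
        + ∑ l₁ : Fin m, p l₁ *
            (2 * Δrep m a b A2 B2 j.succ 0 l₁.succ
              - (if l₁ = j then 1 else 0) * Δrep m a b A2 B2 0 0 0)
        + ∑ l₁ : Fin m, ∑ l₂ : Fin m, p l₁ * p l₂ *
            (Δrep m a b A2 B2 j.succ l₁.succ l₂.succ
              - 2 * (if l₁ = j then 1 else 0) * Δrep m a b A2 B2 0 0 l₂.succ)
        - ∑ l₁ : Fin m, ∑ l₂ : Fin m, ∑ l₃ : Fin m,
            p l₁ * p l₂ * p l₃ * (if l₁ = j then 1 else 0) *
              Δrep m a b A2 B2 0 l₂.succ l₃.succ) := by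
  have hcramer := Matrix.forall_cross_mulVec_eq_zero_iff (A := jetMatrix m a b) hΔ
    (u := pp m p) rfl (by rwa [jetMatrix_mulVec_pp])
    (Fin.cons (DDX m a A2 p q) fun j => DDX m (b j) (B2 j) p q)
  simp only [jetMatrix_mulVec_pp, cramer_cons_DDX, Fin.cons_zero, Fin.cons_succ, pp_succ,
    sum_pp_mul_pp_of_symm p (Δrep_comm a b A2 B2 hA2 hB2 _)] at hcramer
  rw [hcramer]
  refine forall_congr' fun j => ?_
  have hkron := sum_kronecker_eq p (Δrep m a b A2 B2) j
  constructor <;> intro h <;> linear_combination -h - hkron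

/-- Solving the equations `DX·DDY^j − DY^j·DDX = 0` for the second-order jet:
they hold if and only if each `q^j` satisfies the explicit determinantal cubic
expression in `p`. -/
theorem solve_second_jet (m : ℕ) (hm : 1 ≤ m)
    (a : Fin (m + 1) → K) (b : Fin m → Fin (m + 1) → K)
    (A2 : Fin (m + 1) → Fin (m + 1) → K)
    (B2 : Fin m → Fin (m + 1) → Fin (m + 1) → K)
    (hA2 : ∀ l₁ l₂, A2 l₁ l₂ = A2 l₂ l₁)
    (hB2 : ∀ j l₁ l₂, B2 j l₁ l₂ = B2 j l₂ l₁)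
    (p : Fin m → K)
    (hΔ : Δfund m a b ≠ 0) (hDX : DX m a p ≠ 0) (q : Fin m → K) :
    (∀ j : Fin m,
        DX m a p * DDX m (b j) (B2 j) p q - DX m (b j) p * DDX m a A2 p q = 0)
    ↔
    (∀ j : Fin m,
      (0 : K) = q j * Δfund m a b + Δrep m a b A2 B2 j.succ 0 0
        + ∑ l₁ : Fin m, p l₁ *
            (2 * Δrep m a b A2 B2 j.succ 0 l₁.succ
              - (if l₁ = j then 1 else 0) * Δrep m a b A2 B2 0 0 0)
        + ∑ l₁ : Fin m, ∑ l₂ : Fin m, p l₁ * p l₂ *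
            (Δrep m a b A2 B2 j.succ l₁.succ l₂.succ
              - 2 * (if l₁ = j then 1 else 0) * Δrep m a b A2 B2 0 0 l₂.succ)
        - ∑ l₁ : Fin m, ∑ l₂ : Fin m, ∑ l₃ : Fin m,
            p l₁ * p l₂ * p l₃ * (if l₁ = j then 1 else 0) *
              Δrep m a b A2 B2 0 l₂.succ l₃.succ) :=
  solve_second_jet_general m a b A2 B2 hA2 hB2 p hΔ hDX q

end Stmt8
end

section
/- The determinant of the m×m matrix whose (k,l) entry (for k, l ∈ {1, …, m}) is b^k_l·DX − a_l·DY^k equals (DX)^{m−1}·Δ. -/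
namespace Stmt9

variable {R : Type*} [CommRing R]

/-- Extended jet coordinates `(p₀, p₁, …, p_m)` with the convention `p₀ = 1`. -/
def pp (m : ℕ) (p : Fin m → R) : Fin (m + 1) → R := Fin.cons 1 p

/-- `DX = Σ_{l=0}^m p_l a_l`. -/
def DX (m : ℕ) (a : Fin (m + 1) → R) (p : Fin m → R) : R :=
  ∑ l : Fin (m + 1), pp m p l * a l

section Key

variable (m : ℕ) (a : Fin (m + 1) → R) (b : Fin m → Fin (m + 1) → R) (p : Fin m → R)

def U : Matrix (Fin (m + 1)) (Fin (m + 1)) R :=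
  Matrix.of fun l j => Fin.cases (pp m p l) (fun j' => if l = j'.succ then 1 else 0) j

def V : Matrix (Fin (m + 1)) (Fin (m + 1)) R :=
  Matrix.of fun l j => Fin.cases (if l = 0 then 1 else 0)
    (fun j' => DX m a p * (if l = j'.succ then 1 else 0) - a j'.succ * (if l = 0 then 1 else 0)) j

def MM : Matrix (Fin (m + 1)) (Fin (m + 1)) R := Matrix.of (Fin.cons a b)

lemma detU : (U m p).det = 1 := by
  rw [Matrix.det_of_lowerTriangular]
  · rw [Finset.prod_eq_one]
    intro i _
    cases i using Fin.cases with
    | zero => simp [U, pp]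
    | succ i => simp [U]
  · intro i j h
    simp only [OrderDual.toDual_lt_toDual] at h
    cases j using Fin.cases with
    | zero => exact absurd h (Fin.not_lt.2 (Fin.zero_le _))
    | succ j =>
      simp only [U, Matrix.of_apply, Fin.cases_succ]
      exact if_neg (Fin.ne_of_lt h)

lemma detV : (V m a p).det = DX m a p ^ m := by
  rw [Matrix.det_of_upperTriangular]
  · rw [Fin.prod_univ_succ]
    simp [V, Fin.succ_ne_zero]
  · intro i j h
    simp only [id] at h
    cases i using Fin.cases with
    | zero => exact absurd h (Fin.not_lt.2 (Fin.zero_le _))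
    | succ i =>
      cases j using Fin.cases with
      | zero => simp [V, Fin.succ_ne_zero]
      | succ j =>
        simp only [V, Matrix.of_apply, Fin.cases_succ]
        rw [if_neg (Fin.ne_of_gt h), if_neg (Fin.succ_ne_zero i)]
        ring

end Key

section Key2

variable (m : ℕ) (a : Fin (m + 1) → R) (b : Fin m → Fin (m + 1) → R) (p : Fin m → R)

def Q : Matrix (Fin (m + 1)) (Fin (m + 1)) R :=
  Matrix.of (Fin.cons (Fin.cons (DX m a p) 0)
    (fun k => Fin.cons (DX m (b k) p)
      (fun l => b k l.succ * DX m a p - a l.succ * DX m (b k) p)))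

lemma W_apply (l j : Fin (m + 1)) :
    (U m p * V m a p) l j =
      Fin.cases (pp m p l)
        (fun j' => DX m a p * (if l = j'.succ then 1 else 0) - a j'.succ * pp m p l) j := by
  cases j using Fin.cases with
  | zero =>
    rw [Matrix.mul_apply, Fin.sum_univ_succ]
    simp [U, V, Fin.succ_ne_zero]
  | succ j =>
    rw [Matrix.mul_apply, Fin.sum_univ_succ]
    simp only [U, V, Matrix.of_apply, Fin.cases_zero, Fin.cases_succ, Fin.succ_ne_zero,
      if_false, if_true, mul_sub, mul_ite, mul_one, mul_zero, ite_mul, zero_mul, one_mul,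
      sub_zero, Finset.sum_sub_distrib, Finset.sum_ite_eq', Finset.mem_univ, if_true,
      Finset.sum_const_zero]
    rcases Fin.eq_zero_or_eq_succ j.succ with h | ⟨j', hj⟩
    · exact absurd h (Fin.succ_ne_zero j)
    · rw [hj]
      simp only [Fin.succ_inj]
      rw [if_neg (fun h => Fin.succ_ne_zero j' h.symm),
        Finset.sum_ite_eq' Finset.univ j' (fun x => if l = x.succ then DX m a p else 0),
        if_pos (Finset.mem_univ j')]
      ring


lemma prod_eq : MM m a b * (U m p * V m a p) = Q m a b p := by
  ext i j
  rw [Matrix.mul_apply]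
  simp only [W_apply, Fin.cases_zero, Fin.cases_succ]
  cases j using Fin.cases with
  | zero =>
    cases i using Fin.cases with
    | zero =>
      simp only [Q, MM, Matrix.of_apply, Fin.cases_zero, Fin.cons_zero, DX]
      exact Finset.sum_congr rfl fun l _ => mul_comm _ _
    | succ i =>
      simp only [Q, MM, Matrix.of_apply, Fin.cases_zero, Fin.cons_succ, Fin.cons_zero, DX]
      exact Finset.sum_congr rfl fun l _ => mul_comm _ _
  | succ j =>
    simp only [Fin.cases_succ]
    have hsum : ∀ (c : Fin (m + 1) → R),
        ∑ l : Fin (m + 1), c l * (DX m a p * (if l = j.succ then 1 else 0)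
          - a j.succ * pp m p l)
        = DX m a p * c j.succ - a j.succ * ∑ l, pp m p l * c l := by
      intro c
      have step : ∀ l : Fin (m + 1), c l * (DX m a p * (if l = j.succ then 1 else 0)
          - a j.succ * pp m p l)
          = (if l = j.succ then DX m a p * c l else 0) - a j.succ * (pp m p l * c l) := by
        intro l
        rcases eq_or_ne l j.succ with h | h <;> simp [h] <;> ring
      rw [Finset.sum_congr rfl (fun l _ => step l), Finset.sum_sub_distrib,
        Finset.sum_ite_eq' Finset.univ j.succ (fun l => DX m a p * c l),
        if_pos (Finset.mem_univ _), ← Finset.mul_sum]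
    cases i using Fin.cases with
    | zero =>
      simp only [MM, Matrix.of_apply, Fin.cons_zero]
      rw [hsum a]
      simp only [Q, Matrix.of_apply, Fin.cons_zero, Fin.cons_succ, DX]
      simp only [Fin.cons_succ, Pi.zero_apply]
      ring
    | succ i =>
      simp only [MM, Matrix.of_apply, Fin.cons_succ]
      rw [hsum (b i)]
      simp only [Q, Matrix.of_apply, Fin.cons_succ, DX]
      ring

lemma detQ : (Q m a b p).det =
    DX m a p * (Matrix.of fun k l : Fin m =>
      b k l.succ * DX m a p - a l.succ * DX m (b k) p).det := by
  rw [Matrix.det_succ_row_zero, Fin.sum_univ_succ]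
  have h0 : ∀ j : Fin m, Q m a b p 0 j.succ = 0 := fun j => by simp [Q]
  simp only [h0, mul_zero, zero_mul, Finset.sum_const_zero, add_zero]
  have h1 : Q m a b p 0 0 = DX m a p := by simp [Q]
  have h2 : (Q m a b p).submatrix Fin.succ ((0 : Fin (m+1)).succAbove) =
      Matrix.of fun k l : Fin m => b k l.succ * DX m a p - a l.succ * DX m (b k) p := by
    ext k l
    simp [Q, Fin.succAbove_zero, Matrix.submatrix]
  rw [h1, h2]
  simp

lemma key : DX m a p * (Matrix.of fun k l : Fin m =>
      b k l.succ * DX m a p - a l.succ * DX m (b k) p).det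
    = DX m a p ^ m * (MM m a b).det := by
  have h := congrArg Matrix.det (prod_eq m a b p)
  rw [Matrix.det_mul, Matrix.det_mul, detU, detV, detQ, one_mul] at h
  rw [← h]
  ring

end Key2

section Transfer

open MvPolynomial

variable (m : ℕ)

abbrev σg (m : ℕ) := Fin (m + 1) ⊕ (Fin m × Fin (m + 1)) ⊕ Fin m
abbrev Sg (m : ℕ) := MvPolynomial (σg m) ℤ

noncomputable def Ag : Fin (m + 1) → Sg m := fun l => X (Sum.inl l)
noncomputable def Bg : Fin m → Fin (m + 1) → Sg m := fun k l => X (Sum.inr (Sum.inl (k, l)))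
noncomputable def Pg : Fin m → Sg m := fun k => X (Sum.inr (Sum.inr k))

lemma map_pp {A B : Type*} [CommRing A] [CommRing B] (f : A →+* B) (p : Fin m → A)
    (l : Fin (m + 1)) : f (pp m p l) = pp m (f ∘ p) l := by
  cases l using Fin.cases <;> simp [pp]

lemma map_DX {A B : Type*} [CommRing A] [CommRing B] (f : A →+* B)
    (a : Fin (m + 1) → A) (p : Fin m → A) :
    f (DX m a p) = DX m (f ∘ a) (f ∘ p) := by
  simp [DX, map_sum, map_mul, map_pp]

lemma DX_ne_zero : DX m (Ag m) (Pg m) ≠ 0 := by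
  intro h
  let ψ : Sg m →+* ℤ := (MvPolynomial.aeval (R := ℤ) (fun s : σg m =>
    if s = Sum.inl 0 then (1 : ℤ) else 0)).toRingHom
  have h2 := congrArg ψ h
  rw [map_zero, map_DX m ψ, DX, Fin.sum_univ_succ] at h2
  simp only [Function.comp, Ag, Pg, pp, Fin.cons_zero, Fin.cons_succ] at h2
  simp [ψ, Fin.succ_ne_zero] at h2

end Transfer

/-- The determinant of the system for the second-order derivatives equals
`(DX)^{m−1} · Δ`, where `Δ` is the Jacobian determinant. -/
theorem det_of_linear_system (m : ℕ) (hm : 1 ≤ m)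
    (a : Fin (m + 1) → R) (b : Fin m → Fin (m + 1) → R) (p : Fin m → R) :
    (Matrix.of fun k l : Fin m =>
        b k l.succ * DX m a p - a l.succ * DX m (b k) p).det =
      DX m a p ^ (m - 1) *
        (Matrix.of (Fin.cons a b : Fin (m + 1) → Fin (m + 1) → R)).det := by
  classical
  have hS : (Matrix.of fun k l : Fin m =>
        Bg m k l.succ * DX m (Ag m) (Pg m) - Ag m l.succ * DX m (Bg m k) (Pg m)).det =
      DX m (Ag m) (Pg m) ^ (m - 1) * (MM m (Ag m) (Bg m)).det := by
    have hk := key m (Ag m) (Bg m) (Pg m)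
    refine mul_left_cancel₀ (DX_ne_zero m) ?_
    rw [hk, ← pow_mul_pow_sub (DX m (Ag m) (Pg m)) hm, pow_one, mul_assoc]
  set f : σg m → R := Sum.elim a (Sum.elim (fun kl => b kl.1 kl.2) p) with hf
  set φ : Sg m →+* R := (MvPolynomial.aeval f).toRingHom with hφ
  have hA : ∀ l, φ (Ag m l) = a l := fun l => by simp [hφ, Ag, hf]
  have hB : ∀ k l, φ (Bg m k l) = b k l := fun k l => by simp [hφ, Bg, hf]
  have hP : ∀ l, φ (Pg m l) = p l := fun l => by simp [hφ, Pg, hf]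
  have hA' : ⇑φ ∘ Ag m = a := funext hA
  have hB' : ∀ k, ⇑φ ∘ Bg m k = b k := fun k => funext (hB k)
  have hP' : ⇑φ ∘ Pg m = p := funext hP
  have hmain := congrArg φ hS
  rw [map_mul, RingHom.map_det, RingHom.map_det, map_pow, map_DX, hA', hP'] at hmain
  have hM1 : (Matrix.of fun k l : Fin m =>
        Bg m k l.succ * DX m (Ag m) (Pg m) - Ag m l.succ * DX m (Bg m k) (Pg m)).map φ =
      Matrix.of fun k l : Fin m =>
        b k l.succ * DX m a p - a l.succ * DX m (b k) p := by
    ext k l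
    simp only [Matrix.map_apply, Matrix.of_apply, map_sub, map_mul, map_DX, hA', hP', hB' k]
    rw [hA, hB]
  have hM2 : (MM m (Ag m) (Bg m)).map φ =
      Matrix.of (Fin.cons a b : Fin (m + 1) → Fin (m + 1) → R) := by
    ext i j
    cases i using Fin.cases with
    | zero => simp [MM, Matrix.map_apply, hA]
    | succ i => simp [MM, Matrix.map_apply, hB]
  rw [RingHom.mapMatrix_apply, RingHom.mapMatrix_apply, hM1, hM2] at hmain
  exact hmain

end Stmt9
end
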